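/- arXiv:2202.07363 — 7 statements merged into one kernel-verified Lean document; each statement's English description precedes it below -/
import Mathlib

section
/- For every real α > 0 and every x ∈ (0, 2π), the series ∑_{k=1}^∞ k^(−α)·cos(k·x) converges, and its sum equals (1/Γ(α)) · ∫₀^∞ t^(α−1) · (e^t·cos x − 1)/(1 − 2·e^t·cos x + e^(2t)) dt. -/
open Real MeasureTheory Set Filter Topology

/-!
Writing `k ^ (-α) = Γ(α)⁻¹ ∫₀^∞ t ^ (α - 1) e ^ (-k t) dt`, the `N`-th partial sum becomes
`Γ(α)⁻¹ ∫₀^∞ t ^ (α - 1) Re (∑_{k=1}^N z ^ k) dt` with `z = e ^ (-t) w`, `w = e ^ (i x) ≠ 1`.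
Since `z` runs along the segment `(0, w)`, which stays a positive distance `δ` away from `1`,
the truncated geometric sums are bounded by `2 e ^ (-t) / δ`, and dominated convergence
yields the integral of `t ^ (α - 1) Re (z / (1 - z)) = t ^ (α - 1) Re (w / (e ^ t - w))`.
-/

open Complex (I)

lemma integrableOn_rpow_sub_one_mul_exp_neg_mul {α b : ℝ} (hα : 0 < α) (hb : 0 < b) :
    IntegrableOn (fun t : ℝ => t ^ (α - 1) * exp (-(b * t))) (Ioi 0) :=
  Integrable.of_integral_ne_zero <| by
    rw [integral_rpow_mul_exp_neg_mul_Ioi hα hb]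
    exact (mul_pos (by positivity) (Gamma_pos_of_pos hα)).ne'

lemma rpow_neg_eq_integral {α b : ℝ} (hα : 0 < α) (hb : 0 < b) :
    b ^ (-α) = 1 / Gamma α * ∫ t in Ioi 0, t ^ (α - 1) * exp (-(b * t)) := by
  rw [integral_rpow_mul_exp_neg_mul_Ioi hα hb, one_div b, inv_rpow hb.le, rpow_neg hb.le]
  field_simp [(Gamma_pos_of_pos hα).ne']

lemma exists_pos_le_norm_one_sub_ofReal_mul {w : ℂ} (hw : ‖w‖ ≤ 1) (hw1 : w ≠ 1) :
    ∃ δ > 0, ∀ r ∈ Icc (0 : ℝ) 1, δ ≤ ‖1 - r * w‖ := by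
  obtain ⟨r₀, hr₀, hmin⟩ := isCompact_Icc.exists_isMinOn (nonempty_Icc.2 zero_le_one)
    (f := fun r : ℝ => ‖1 - r * w‖) (by fun_prop)
  refine ⟨_, norm_pos_iff.2 fun h => hw1 ?_, hmin⟩
  have h1 : 1 = (r₀ : ℂ) * w := sub_eq_zero.1 h
  have hr₀1 : r₀ = 1 := by
    have := congrArg norm h1
    rw [norm_one, norm_mul, Complex.norm_of_nonneg hr₀.1] at this
    nlinarith [hr₀.2, mul_le_mul_of_nonneg_left hw hr₀.1]
  simpa [hr₀1] using h1.symm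

lemma norm_sum_range_pow_succ_le {𝕜 : Type*} [NormedField 𝕜] {z : 𝕜} (hz : ‖z‖ ≤ 1)
    (hz1 : z ≠ 1) (N : ℕ) : ‖∑ k ∈ Finset.range N, z ^ (k + 1)‖ ≤ 2 * ‖z‖ / ‖1 - z‖ := by
  have hsum : ∑ k ∈ Finset.range N, z ^ (k + 1) = z * (1 - z ^ N) / (1 - z) := by
    rw [eq_div_iff (sub_ne_zero.2 hz1.symm), ← mul_neg_geom_sum]
    simp only [pow_succ', ← Finset.mul_sum]
    ring
  have hpow : ‖1 - z ^ N‖ ≤ 2 := calc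
    ‖1 - z ^ N‖ ≤ ‖(1 : 𝕜)‖ + ‖z ^ N‖ := norm_sub_le _ _
    _ ≤ 2 := by rw [norm_one, norm_pow]; linarith [pow_le_one₀ (n := N) (norm_nonneg z) hz]
  rw [hsum, norm_div, norm_mul, mul_comm 2]
  gcongr

lemma norm_ofReal_exp_neg_mul_le {w : ℂ} (hw : ‖w‖ ≤ 1) (t : ℝ) :
    ‖(exp (-t) : ℂ) * w‖ ≤ exp (-t) := by
  rw [norm_mul, Complex.norm_of_nonneg (exp_pos _).le]
  exact mul_le_of_le_one_right (exp_pos _).le hw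

lemma hasSum_pow_succ_ofReal_exp_neg_mul {w : ℂ} (hw : ‖w‖ ≤ 1) {t : ℝ} (ht : 0 < t) :
    HasSum (fun k : ℕ => ((exp (-t) : ℂ) * w) ^ (k + 1)) (w / (exp t - w)) := by
  set z : ℂ := exp (-t) * w
  have hz : ‖z‖ < 1 := (norm_ofReal_exp_neg_mul_le hw t).trans_lt (exp_lt_one_iff.2 (by linarith))
  have hexp : (exp (-t) : ℂ) * exp t = 1 := by rw [← Complex.ofReal_mul, ← exp_add]; simp
  have hw_ne : (exp t : ℂ) - w ≠ 0 := by
    refine sub_ne_zero.2 fun h => ?_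
    have : ‖(exp t : ℂ)‖ ≤ 1 := h ▸ hw
    rw [Complex.norm_of_nonneg (exp_pos _).le] at this
    linarith [add_one_le_exp t]
  have hz_ne : 1 - z ≠ 0 := sub_ne_zero.2 fun h => by simp [← h] at hz
  have hsum : z * (1 - z)⁻¹ = w / (exp t - w) := by
    rw [← div_eq_mul_inv, div_eq_div_iff hz_ne hw_ne]
    linear_combination w * hexp
  simpa only [← pow_succ', hsum] using (hasSum_geometric_of_norm_lt_one hz).mul_left z

lemma sum_rpow_neg_mul_re_pow_eq_integral {α : ℝ} (hα : 0 < α) (w : ℂ) (N : ℕ) :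
    ∑ k ∈ Finset.range N, ((k : ℝ) + 1) ^ (-α) * (w ^ (k + 1)).re =
      1 / Gamma α * ∫ t in Ioi 0,
        t ^ (α - 1) * (∑ k ∈ Finset.range N, ((exp (-t) : ℂ) * w) ^ (k + 1)).re := by
  have hterm (t : ℝ) (k : ℕ) : t ^ (α - 1) * (((exp (-t) : ℂ) * w) ^ (k + 1)).re =
      (w ^ (k + 1)).re * (t ^ (α - 1) * exp (-(((k : ℝ) + 1) * t))) := by
    rw [mul_pow, ← Complex.ofReal_pow, Complex.re_ofReal_mul, ← exp_nat_mul]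
    push_cast
    ring_nf
  simp only [Complex.re_sum, Finset.mul_sum, hterm]
  rw [integral_finsetSum _ fun k _ =>
    (integrableOn_rpow_sub_one_mul_exp_neg_mul hα (by positivity)).const_mul _, Finset.mul_sum]
  refine Finset.sum_congr rfl fun k _ => ?_
  rw [integral_const_mul, rpow_neg_eq_integral hα (by positivity)]
  ring

theorem tendsto_sum_rpow_neg_mul_re_pow {α : ℝ} (hα : 0 < α) {w : ℂ} (hw : ‖w‖ ≤ 1)
    (hw1 : w ≠ 1) :
    Tendsto (fun N : ℕ => ∑ k ∈ Finset.range N, ((k : ℝ) + 1) ^ (-α) * (w ^ (k + 1)).re) atTop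
      (𝓝 (1 / Gamma α * ∫ t in Ioi 0, t ^ (α - 1) * (w / (exp t - w)).re)) := by
  obtain ⟨δ, hδ, hδle⟩ := exists_pos_le_norm_one_sub_ofReal_mul hw hw1
  simp only [sum_rpow_neg_mul_re_pow_eq_integral hα w]
  refine (tendsto_integral_of_dominated_convergence (fun t => 2 / δ * (t ^ (α - 1) * exp (-(1 * t))))
    (fun N => by fun_prop) ((integrableOn_rpow_sub_one_mul_exp_neg_mul hα one_pos).const_mul _)
    (fun N => ?_) ?_).const_mul _
  · refine (ae_restrict_iff' measurableSet_Ioi).2 (ae_of_all _ fun t (ht : 0 < t) => ?_)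
    set z : ℂ := exp (-t) * w
    have hexp_le : exp (-t) ≤ 1 := exp_le_one_iff.2 (by linarith)
    have hz_le : ‖z‖ ≤ exp (-t) := norm_ofReal_exp_neg_mul_le hw t
    have hδz : δ ≤ ‖1 - z‖ := hδle _ ⟨(exp_pos _).le, hexp_le⟩
    have hz1 : z ≠ 1 := fun h => by simp [h] at hδz; linarith
    have htα : 0 < t ^ (α - 1) := rpow_pos_of_pos ht _
    calc ‖t ^ (α - 1) * (∑ k ∈ Finset.range N, z ^ (k + 1)).re‖
        ≤ t ^ (α - 1) * ‖∑ k ∈ Finset.range N, z ^ (k + 1)‖ := by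
          rw [norm_mul, norm_of_nonneg htα.le]
          gcongr
          exact Complex.abs_re_le_norm _
      _ ≤ t ^ (α - 1) * (2 * ‖z‖ / ‖1 - z‖) := by
          gcongr
          exact norm_sum_range_pow_succ_le (hz_le.trans hexp_le) hz1 N
      _ ≤ t ^ (α - 1) * (2 * exp (-t) / δ) := by gcongr
      _ = 2 / δ * (t ^ (α - 1) * exp (-(1 * t))) := by ring_nf
  · refine (ae_restrict_iff' measurableSet_Ioi).2 (ae_of_all _ fun t (ht : 0 < t) => ?_)
    exact ((Complex.continuous_re.tendsto _).comp
      (hasSum_pow_succ_ofReal_exp_neg_mul hw ht).tendsto_sum_nat).const_mul _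

lemma re_exp_mul_I_div_exp_sub (x t : ℝ) :
    (Complex.exp (x * I) / (exp t - Complex.exp (x * I))).re =
      (exp t * cos x - 1) / (1 - 2 * exp t * cos x + exp (2 * t)) := by
  have hE : exp (2 * t) = exp t ^ 2 := by rw [← exp_nat_mul]; norm_num
  rw [Complex.div_re, ← add_div, Complex.normSq_apply]
  simp only [Complex.sub_re, Complex.sub_im, Complex.ofReal_re, Complex.ofReal_im,
    Complex.exp_ofReal_mul_I_re, Complex.exp_ofReal_mul_I_im]
  congr 1
  · linear_combination -(sin_sq_add_cos_sq x)
  · linear_combination -hE + (sin_sq_add_cos_sq x)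

/-- For `α > 0` and `x ∈ (0, 2π)`, the series `∑_{k≥1} k^(−α) cos(kx)`
converges (in the sense of its partial sums) with sum equal to the explicit integral
`(1/Γ(α)) ∫₀^∞ t^(α−1) (e^t cos x − 1)/(1 − 2 e^t cos x + e^{2t}) dt`. -/
theorem statement2 (α x : ℝ) (hα : 0 < α) (hx : x ∈ Set.Ioo (0:ℝ) (2 * π)) :
    Filter.Tendsto
      (fun N : ℕ => ∑ k ∈ Finset.range N, ((k : ℝ) + 1) ^ (-α) * Real.cos (((k : ℝ) + 1) * x))
      Filter.atTop
      (𝓝 ((1 / Real.Gamma α) *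
        ∫ t in Set.Ioi (0:ℝ),
          t ^ (α - 1) * (Real.exp t * Real.cos x - 1) /
            (1 - 2 * Real.exp t * Real.cos x + Real.exp (2 * t)))) := by
  set w := Complex.exp (x * I)
  have hw1 : w ≠ 1 := fun h => hx.1.ne' <|
    (cos_eq_one_iff_of_lt_of_lt (by linarith [hx.1, pi_pos]) hx.2).1 <| by
      simpa [w, Complex.exp_ofReal_mul_I_re] using congrArg Complex.re h
  have hcos (k : ℕ) : cos (((k : ℝ) + 1) * x) = (w ^ (k + 1)).re := by
    rw [← Complex.exp_nat_mul, ← mul_assoc, ← Complex.exp_ofReal_mul_I_re]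
    push_cast
    rfl
  have hintegrand (t : ℝ) : t ^ (α - 1) * (exp t * cos x - 1) /
      (1 - 2 * exp t * cos x + exp (2 * t)) = t ^ (α - 1) * (w / (exp t - w)).re := by
    rw [re_exp_mul_I_div_exp_sub, mul_div_assoc]
  simp only [hcos, hintegrand]
  exact tendsto_sum_rpow_neg_mul_re_pow hα (Complex.norm_exp_ofReal_mul_I x).le hw1
end

section
/- For every real α > 0, the function K_α is even and is strictly increasing on the interval (−π, 0): for all −π < x < y < 0 one has K_α(x) < K_α(y). -/
/-!
Writing `u = eᵗ`, the integrand is `t^(α-1) · (u c - 1) / (1 - 2 u c + u²)` with `c = cos x`, so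
`K_α x` depends on `x` only through `cos x`; this gives evenness. For `u > 1` the ratio is strictly
increasing in `c ∈ (-1, 1)`, since its `c`-derivative is `u (u² - 1) / (1 - 2 u c + u²)²`, and it is
`O(1/u)`, so the integral converges against the Gamma integrand and inherits strict monotonicity
in `c`. Since `cos` is strictly increasing from `(-π, 0)` into `(-1, 1)`, the claim follows.
-/

open Real MeasureTheory Set

noncomputable def Kker (α x : ℝ) : ℝ :=
  letI : Decidable (∃ k : ℤ, x = 2 * π * k) := Classical.propDecidable _
  if ∃ k : ℤ, x = 2 * π * k then 0
  else (1 / (π * Real.Gamma α)) *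
    ∫ t in Set.Ioi (0:ℝ),
      t ^ (α - 1) * (Real.exp t * Real.cos x - 1) /
        (1 - 2 * Real.exp t * Real.cos x + Real.exp (2 * t))

noncomputable def kernelRatio (u c : ℝ) : ℝ := (u * c - 1) / (1 - 2 * u * c + u ^ 2)

lemma one_sub_two_mul_mul_add_sq_pos {u c : ℝ} (hc : |c| < 1) : 0 < 1 - 2 * u * c + u ^ 2 := by
  have hc2 : c ^ 2 < 1 := sq_lt_one_iff_abs_lt_one c |>.2 hc
  nlinarith [sq_nonneg (u - c)]

lemma kernelRatio_strictMonoOn {u : ℝ} (hu : 1 < u) :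
    StrictMonoOn (kernelRatio u) (Ioo (-1) 1) := by
  intro c hc d hd hcd
  rw [kernelRatio, kernelRatio, div_lt_div_iff₀ (one_sub_two_mul_mul_add_sq_pos (abs_lt.2 hc))
    (one_sub_two_mul_mul_add_sq_pos (abs_lt.2 hd))]
  have key : (u * d - 1) * (1 - 2 * u * c + u ^ 2) - (u * c - 1) * (1 - 2 * u * d + u ^ 2)
      = (d - c) * (u * (u ^ 2 - 1)) := by ring
  have hpos : 0 < (d - c) * (u * (u ^ 2 - 1)) := by
    have hu2 : 0 < u ^ 2 - 1 := by nlinarith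
    have hdc : 0 < d - c := sub_pos.2 hcd
    positivity
  linarith

lemma abs_kernelRatio_le {u c : ℝ} (hu : 1 ≤ u) (hc : |c| < 1) :
    |kernelRatio u c| ≤ 2 / (1 - |c|) * u⁻¹ := by
  have hc' : 0 < 1 - |c| := sub_pos.2 hc
  have hD := one_sub_two_mul_mul_add_sq_pos (u := u) hc
  have hnum : |u * c - 1| ≤ 2 * u := by
    rw [abs_le]; constructor <;> nlinarith [abs_lt.1 hc]
  have hden : (1 - |c|) * u ^ 2 ≤ 1 - 2 * u * c + u ^ 2 := by
    nlinarith [mul_nonneg (abs_nonneg c) (sq_nonneg (u - 1)),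
      mul_le_mul_of_nonneg_left (le_abs_self c) (by linarith : (0 : ℝ) ≤ u)]
  calc |kernelRatio u c| = |u * c - 1| / (1 - 2 * u * c + u ^ 2) := by
        rw [kernelRatio, abs_div, abs_of_pos hD]
    _ ≤ 2 * u / ((1 - |c|) * u ^ 2) := div_le_div₀ (by linarith) hnum (by positivity) hden
    _ = 2 / (1 - |c|) * u⁻¹ := by field_simp

lemma integrableOn_rpow_mul_kernelRatio_exp {α c : ℝ} (hα : 0 < α) (hc : |c| < 1) :
    IntegrableOn (fun t ↦ t ^ (α - 1) * kernelRatio (exp t) c) (Ioi 0) := by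
  refine ((GammaIntegral_convergent hα).const_mul (2 / (1 - |c|))).mono' ?_ ?_
  · exact (by unfold kernelRatio; fun_prop : Measurable _).aestronglyMeasurable
  · filter_upwards [ae_restrict_mem measurableSet_Ioi] with t (ht : 0 < t)
    have hpow : 0 ≤ t ^ (α - 1) := rpow_nonneg ht.le _
    calc ‖t ^ (α - 1) * kernelRatio (exp t) c‖ = t ^ (α - 1) * |kernelRatio (exp t) c| := by
          rw [norm_mul, norm_of_nonneg hpow, norm_eq_abs]
      _ ≤ t ^ (α - 1) * (2 / (1 - |c|) * (exp t)⁻¹) :=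
          mul_le_mul_of_nonneg_left (abs_kernelRatio_le (one_le_exp ht.le) hc) hpow
      _ = 2 / (1 - |c|) * (exp (-t) * t ^ (α - 1)) := by rw [exp_neg]; ring

lemma setIntegral_lt_setIntegral_of_forall_lt {X : Type*} [MeasurableSpace X] {μ : Measure X}
    {s : Set X} {f g : X → ℝ} (hs : MeasurableSet s) (hμs : μ s ≠ 0) (hf : IntegrableOn f s μ)
    (hg : IntegrableOn g s μ) (hlt : ∀ x ∈ s, f x < g x) :
    ∫ x in s, f x ∂μ < ∫ x in s, g x ∂μ := by
  rw [← sub_pos, ← integral_sub hg hf]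
  refine (setIntegral_pos_iff_support_of_nonneg_ae ?_ (hg.sub hf)).2 ?_
  · filter_upwards [ae_restrict_mem hs] with x hx
    exact sub_nonneg.2 (hlt x hx).le
  · have hsupp : s ⊆ Function.support (g - f) := fun x hx ↦ (sub_pos.2 (hlt x hx)).ne'
    rwa [inter_eq_self_of_subset_right hsupp, pos_iff_ne_zero]

lemma strictMonoOn_integral_rpow_mul_kernelRatio_exp {α : ℝ} (hα : 0 < α) :
    StrictMonoOn (fun c ↦ ∫ t in Ioi 0, t ^ (α - 1) * kernelRatio (exp t) c) (Ioo (-1) 1) :=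
  fun c hc d hd hcd ↦ setIntegral_lt_setIntegral_of_forall_lt measurableSet_Ioi (by simp)
    (integrableOn_rpow_mul_kernelRatio_exp hα (abs_lt.2 hc))
    (integrableOn_rpow_mul_kernelRatio_exp hα (abs_lt.2 hd))
    fun t (ht : 0 < t) ↦ mul_lt_mul_of_pos_left
      (kernelRatio_strictMonoOn (one_lt_exp_iff.2 ht) hc hd hcd) (rpow_pos_of_pos ht _)

lemma Kker_eq (α x : ℝ) : Kker α x = if cos x = 1 then 0 else
    1 / (π * Gamma α) * ∫ t in Ioi 0, t ^ (α - 1) * kernelRatio (exp t) (cos x) := by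
  have hcos : (∃ k : ℤ, x = 2 * π * k) ↔ cos x = 1 := by
    rw [cos_eq_one_iff]
    exact exists_congr fun k ↦ by constructor <;> intro h <;> linarith
  have hexp (t : ℝ) : exp (2 * t) = exp t ^ 2 := by rw [← exp_nat_mul]; norm_num
  simp only [Kker, hcos, kernelRatio, hexp, mul_div_assoc]

lemma strictMonoOn_cos_Icc_neg_pi_zero : StrictMonoOn cos (Icc (-π) 0) := fun x hx y hy hxy ↦ by
  rw [← cos_neg x, ← cos_neg y]
  exact strictAntiOn_cos ⟨by linarith [hy.2], by linarith [hy.1]⟩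
    ⟨by linarith [hx.2], by linarith [hx.1]⟩ (neg_lt_neg hxy)

lemma mapsTo_cos_Ioo_neg_pi_zero : MapsTo cos (Ioo (-π) 0) (Ioo (-1) 1) := by
  intro x hx
  have hcos := strictMonoOn_cos_Icc_neg_pi_zero
  have hπ : -π ≤ 0 := neg_nonpos.2 pi_pos.le
  constructor
  · simpa using hcos ⟨le_rfl, hπ⟩ (Ioo_subset_Icc_self hx) hx.1
  · simpa using hcos (Ioo_subset_Icc_self hx) ⟨hπ, le_rfl⟩ hx.2

/-- For every `α > 0`, the kernel `K_α` is even and strictly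
increasing on `(−π, 0)`. -/
theorem statement3 (α : ℝ) (hα : 0 < α) :
    (∀ x : ℝ, Kker α (-x) = Kker α x) ∧
    StrictMonoOn (Kker α) (Set.Ioo (-π) 0) := by
  refine ⟨fun x ↦ by rw [Kker_eq, Kker_eq, cos_neg], fun x hx y hy hxy ↦ ?_⟩
  rw [Kker_eq, Kker_eq, if_neg (mapsTo_cos_Ioo_neg_pi_zero hx).2.ne,
    if_neg (mapsTo_cos_Ioo_neg_pi_zero hy).2.ne]
  have hconst : 0 < 1 / (π * Gamma α) := by have := Gamma_pos_of_pos hα; positivity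
  exact mul_lt_mul_of_pos_left ((strictMonoOn_integral_rpow_mul_kernelRatio_exp hα).comp
    (strictMonoOn_cos_Icc_neg_pi_zero.mono Ioo_subset_Icc_self) mapsTo_cos_Ioo_neg_pi_zero
    hx hy hxy) hconst
end

section
/- For every x ∈ (0, 2π), ∫₀^∞ (e^t·cos x − 1)/(1 − 2·e^t·cos x + e^(2t)) dt = −(1/2)·log(2·(1 − cos x)). Equivalently, the kernel for α = 1 satisfies K_1(x) = −(1/(2π))·log(2·(1 − cos x)) for all x ∈ (0, 2π). -/
/-! Put `c = cos x`, so `c < 1`, and `u = e^{-t}`. The integrand equals `u (c - u) / (1 - 2cu + u²)`,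
the `t`-derivative of `½ log (1 - 2c e^{-t} + e^{-2t}) = log |1 - e^{-t + ix}|`. This antiderivative
tends to `0` as `t → ∞` and equals `½ log (2 (1 - c))` at `t = 0`, and the integrand is `O(e^{-t})`,
so the improper integral is the difference of the two values. -/

open Real MeasureTheory Set Filter Topology

open Asymptotics

namespace KernelOne

variable {c : ℝ}

lemma one_sub_two_mul_add_sq_pos (hc : c < 1) {u : ℝ} (hu : 0 < u) :
    0 < 1 - 2 * c * u + u ^ 2 := by
  nlinarith [sq_nonneg (u - 1), mul_pos hu (sub_pos.2 hc)]

lemma integrand_eq_exp_neg (c t : ℝ) :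
    (exp t * c - 1) / (1 - 2 * exp t * c + exp (2 * t)) =
      exp (-t) * ((c - exp (-t)) / (1 - 2 * c * exp (-t) + exp (-t) ^ 2)) := by
  have hdenom : 1 - 2 * exp t * c + exp (2 * t) =
      exp t ^ 2 * (1 - 2 * c * exp (-t) + exp (-t) ^ 2) := by
    rw [exp_neg, show 2 * t = t + t by ring, exp_add]
    field_simp
    ring
  rw [hdenom, ← div_div, ← mul_div_assoc, exp_neg]
  congr 1
  field_simp

lemma hasDerivAt_half_log (hc : c < 1) (t : ℝ) :
    HasDerivAt (fun t => log (1 - 2 * c * exp (-t) + exp (-t) ^ 2) / 2)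
      (exp (-t) * ((c - exp (-t)) / (1 - 2 * c * exp (-t) + exp (-t) ^ 2))) t := by
  have hexp : HasDerivAt (fun t => exp (-t)) (-exp (-t)) t := by
    simpa using (hasDerivAt_neg t).exp
  have hquad_pos := one_sub_two_mul_add_sq_pos hc (exp_pos (-t))
  have hquad : HasDerivAt (fun t => 1 - 2 * c * exp (-t) + exp (-t) ^ 2)
      (2 * c * exp (-t) - 2 * exp (-t) ^ 2) t :=
    (((hexp.const_mul (2 * c)).const_sub 1).add (hexp.pow 2)).congr_deriv (by ring)
  exact ((hquad.log hquad_pos.ne').div_const 2).congr_deriv (by field_simp)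

lemma tendsto_half_log_atTop :
    Tendsto (fun t => log (1 - 2 * c * exp (-t) + exp (-t) ^ 2) / 2) atTop (𝓝 0) := by
  have h := tendsto_exp_neg_atTop_nhds_zero
  have hD : Tendsto (fun t => 1 - 2 * c * exp (-t) + exp (-t) ^ 2) atTop (𝓝 1) := by
    simpa using ((h.const_mul (2 * c)).const_sub 1).add (h.pow 2)
  simpa using ((continuousAt_log one_ne_zero).tendsto.comp hD).div_const 2

lemma integrableOn_Ioi (hc : c < 1) :
    IntegrableOn (fun t => exp (-t) * ((c - exp (-t)) / (1 - 2 * c * exp (-t) + exp (-t) ^ 2)))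
      (Ioi 0) := by
  have h := tendsto_exp_neg_atTop_nhds_zero
  have hcont :
      Continuous fun t => exp (-t) * ((c - exp (-t)) / (1 - 2 * c * exp (-t) + exp (-t) ^ 2)) :=
    (continuous_exp.comp continuous_neg).mul <| Continuous.div (by fun_prop) (by fun_prop)
      fun t => (one_sub_two_mul_add_sq_pos hc (exp_pos (-t))).ne'
  have hratio : Tendsto (fun t => (c - exp (-t)) / (1 - 2 * c * exp (-t) + exp (-t) ^ 2))
      atTop (𝓝 c) := by
    have := (h.const_sub c).div (((h.const_mul (2 * c)).const_sub 1).add (h.pow 2)) (by norm_num)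
    simpa [Pi.div_def] using this
  refine integrable_of_isBigO_exp_neg one_pos hcont.continuousOn ?_
  simpa using (isBigO_refl (fun t => exp (-t)) atTop).mul (hratio.isBigO_one ℝ)

theorem integral_Ioi (hc : c < 1) :
    ∫ t in Ioi (0 : ℝ), (exp t * c - 1) / (1 - 2 * exp t * c + exp (2 * t)) =
      -(1 / 2) * log (2 * (1 - c)) := by
  simp_rw [integrand_eq_exp_neg c]
  rw [integral_Ioi_of_hasDerivAt_of_tendsto' (fun t _ => hasDerivAt_half_log hc t)
    (integrableOn_Ioi hc) tendsto_half_log_atTop, neg_zero, exp_zero, show 1 - 2 * c * 1 + 1 ^ 2 = 2 * (1 - c) by ring]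
  ring

end KernelOne

lemma Real.cos_lt_one_of_mem_Ioo {x : ℝ} (hx : x ∈ Ioo 0 (2 * π)) : cos x < 1 :=
  (cos_le_one x).lt_of_ne fun h =>
    hx.1.ne' ((cos_eq_one_iff_of_lt_of_lt (by linarith [hx.1, pi_pos]) hx.2).1 h)

lemma Kker_one_of_cos_ne_one {x : ℝ} (hx : cos x ≠ 1) :
    Kker 1 x = 1 / π * ∫ t in Ioi (0 : ℝ),
      (exp t * cos x - 1) / (1 - 2 * exp t * cos x + exp (2 * t)) := by
  have hx' : ¬∃ k : ℤ, x = 2 * π * k := by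
    rintro ⟨k, rfl⟩
    exact hx (by simpa [mul_comm] using cos_int_mul_two_pi k)
  simp [Kker, hx']

/-- Explicit evaluation of the kernel integral for `α = 1`:
for `x ∈ (0, 2π)` one has
`∫₀^∞ (e^t cos x − 1)/(1 − 2 e^t cos x + e^{2t}) dt = −(1/2) log(2(1 − cos x))`,
equivalently `K₁(x) = −(1/(2π)) log(2(1 − cos x))`. -/
theorem statement5 (x : ℝ) (hx : x ∈ Set.Ioo (0:ℝ) (2 * π)) :
    (∫ t in Set.Ioi (0:ℝ),
        (Real.exp t * Real.cos x - 1) /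
          (1 - 2 * Real.exp t * Real.cos x + Real.exp (2 * t)))
      = -(1 / 2) * Real.log (2 * (1 - Real.cos x)) ∧
    Kker 1 x = -(1 / (2 * π)) * Real.log (2 * (1 - Real.cos x)) := by
  have hc := cos_lt_one_of_mem_Ioo hx
  have hI := KernelOne.integral_Ioi hc
  refine ⟨hI, ?_⟩
  rw [Kker_one_of_cos_ne_one hc.ne, hI]
  ring
end

section
/- Let α ∈ (0,1) and p > 1 be real. There exists a constant C > 0, depending only on α and p, such that for every c > 0 and every steady solution φ with speed c (for either nonlinearity, case abs or case sgn) satisfying n′(φ(x)) ≤ c for all x ∈ ℝ, one has sup_{x ∈ ℝ} |φ(x)| ≤ C·(1 + c)^(1/(p−1)). -/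
open Real MeasureTheory Set Filter Topology

/-- A steady travelling-wave solution of speed `c` with nonlinearity `n`:
a continuous, `2π`-periodic, zero-mean function `φ` satisfying the steady
convolution equation. -/
def IsSteadySolution (α c : ℝ) (n φ : ℝ → ℝ) : Prop :=
  Continuous φ ∧ Function.Periodic φ (2 * π) ∧
  (∫ y in (-π)..π, φ y) = 0 ∧
  ∀ x : ℝ, (∫ y in (-π)..π, Kker α (x - y) * φ y) =
    c * φ x - n (φ x) + (1 / (2 * π)) * ∫ y in (-π)..π, n (φ y)

/-- Case abs nonlinearity `n(x) = |x|^p`. -/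
noncomputable def nAbs (p x : ℝ) : ℝ := |x| ^ p
/-- Case sgn nonlinearity `n(x) = x·|x|^(p-1)`. -/
noncomputable def nSgn (p x : ℝ) : ℝ := x * |x| ^ (p - 1)
/-- Derivative of the case abs nonlinearity, `n′(x) = p·x·|x|^(p-2)`. -/
noncomputable def nAbs' (p x : ℝ) : ℝ := p * x * |x| ^ (p - 2)
/-- Derivative of the case sgn nonlinearity, `n′(x) = p·|x|^(p-1)`. -/
noncomputable def nSgn' (p x : ℝ) : ℝ := p * |x| ^ (p - 1)

/-!
In case sgn the hypothesis `n′(φ) ≤ c` says `p |φ|^(p-1) ≤ c`, which is already the bound.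
In case abs it only bounds the maximum `M` of `φ`, and the minimum `-m` is controlled by the
equation at a minimum point. The kernel is integrable over a period
(`|K_α x| ≤ 1/(2π) + B |x|^(α-1)` on `[-π, π]`), so the convolution term is at most
`‖K_α‖₁ · max M m`; zero mean gives `∫ φ⁻ = ∫ φ⁺ ≤ 2π M`, so the mean of `|φ|^p` is at most
`M^p + m^(p-1) M`. Hence `c m + m^p ≤ M^p + m^(p-1) M + ‖K_α‖₁ max M m`, and when `m > 2M` this
gives `(1/2 - 2^(-p)) m^(p-1) ≤ ‖K_α‖₁`.
-/

theorem intervalIntegrable_abs_rpow {r : ℝ} (hr : -1 < r) (a b : ℝ) :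
    IntervalIntegrable (fun x => |x| ^ r) volume a b := by
  have hpos : ∀ c, 0 ≤ c → IntervalIntegrable (fun x => |x| ^ r) volume 0 c := fun c hc =>
    (intervalIntegrable_congr fun x hx => by
      rw [uIoc_of_le hc] at hx; simp only [abs_of_pos hx.1]).1
      (intervalIntegral.intervalIntegrable_rpow' hr)
  have hall : ∀ c, IntervalIntegrable (fun x => |x| ^ r) volume 0 c := by
    intro c
    rcases le_total 0 c with hc | hc
    · exact hpos c hc
    · simpa using (IntervalIntegrable.iff_comp_neg).1 (hpos (-c) (by linarith))
  exact (hall a).symm.trans (hall b)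

section MinRpow

variable {α s : ℝ}

theorem integrableOn_Ioi_min_rpow (hα : α ∈ Ioo (-1) 1) (hs : 0 < s) :
    IntegrableOn (fun t => min (t ^ (α - 2)) (t ^ α / s ^ 2)) (Ioi 0) := by
  have hmeas : Measurable fun t : ℝ => min (t ^ (α - 2)) (t ^ α / s ^ 2) := by fun_prop
  have hnonneg : ∀ t : ℝ, 0 < t → 0 ≤ min (t ^ (α - 2)) (t ^ α / s ^ 2) := fun t ht =>
    le_min (rpow_nonneg ht.le _) (by positivity)
  have hnear : IntegrableOn (fun t => min (t ^ (α - 2)) (t ^ α / s ^ 2)) (Ioc 0 s) := by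
    refine Integrable.mono' (g := fun t => t ^ α / s ^ 2)
      ((intervalIntegral.intervalIntegrable_rpow' hα.1).1.div_const _)
      hmeas.aestronglyMeasurable ((ae_restrict_iff' measurableSet_Ioc).2 (.of_forall ?_))
    intro t ht
    rw [norm_of_nonneg (hnonneg t ht.1)]
    exact min_le_right _ _
  have hfar : IntegrableOn (fun t => min (t ^ (α - 2)) (t ^ α / s ^ 2)) (Ioi s) := by
    refine Integrable.mono' (integrableOn_Ioi_rpow_of_lt (a := α - 2) (by linarith [hα.2]) hs)
      hmeas.aestronglyMeasurable ((ae_restrict_iff' measurableSet_Ioi).2 (.of_forall ?_))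
    intro t ht
    rw [norm_of_nonneg (hnonneg t (hs.trans ht))]
    exact min_le_left _ _
  rw [← Ioc_union_Ioi_eq_Ioi hs.le]
  exact hnear.union hfar

theorem setIntegral_Ioi_min_rpow_le (hα : α ∈ Ioo (-1) 1) (hs : 0 < s) :
    ∫ t in Ioi 0, min (t ^ (α - 2)) (t ^ α / s ^ 2) ≤
      (1 / (α + 1) + 1 / (1 - α)) * s ^ (α - 1) := by
  have hint := integrableOn_Ioi_min_rpow hα hs
  have hnear : ∫ t in Ioc 0 s, min (t ^ (α - 2)) (t ^ α / s ^ 2) ≤ s ^ (α - 1) / (α + 1) :=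
    calc ∫ t in Ioc 0 s, min (t ^ (α - 2)) (t ^ α / s ^ 2)
        ≤ ∫ t in Ioc 0 s, t ^ α / s ^ 2 :=
          setIntegral_mono_on (hint.mono_set Ioc_subset_Ioi_self)
            ((intervalIntegral.intervalIntegrable_rpow' hα.1).1.div_const _) measurableSet_Ioc
            fun t _ => min_le_right _ _
      _ = s ^ (α - 1) / (α + 1) := by
          have hα1 : α + 1 ≠ 0 := by linarith [hα.1]
          rw [integral_div, ← intervalIntegral.integral_of_le hs.le,
            integral_rpow (.inl hα.1), zero_rpow hα1, sub_zero,
            show α + 1 = α - 1 + 2 by ring, rpow_add hs, rpow_two]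
          field_simp
  have hfar : ∫ t in Ioi s, min (t ^ (α - 2)) (t ^ α / s ^ 2) ≤ s ^ (α - 1) / (1 - α) :=
    calc ∫ t in Ioi s, min (t ^ (α - 2)) (t ^ α / s ^ 2)
        ≤ ∫ t in Ioi s, t ^ (α - 2) :=
          setIntegral_mono_on (hint.mono_set (Ioi_subset_Ioi hs.le))
            (integrableOn_Ioi_rpow_of_lt (by linarith [hα.2]) hs) measurableSet_Ioi
            fun t _ => min_le_left _ _
      _ = s ^ (α - 1) / (1 - α) := by
          rw [integral_Ioi_rpow_of_lt (by linarith [hα.2]) hs, show α - 2 + 1 = α - 1 by ring,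
            neg_div, ← div_neg, neg_sub]
  calc ∫ t in Ioi 0, min (t ^ (α - 2)) (t ^ α / s ^ 2)
      = (∫ t in Ioc 0 s, min (t ^ (α - 2)) (t ^ α / s ^ 2)) +
          ∫ t in Ioi s, min (t ^ (α - 2)) (t ^ α / s ^ 2) := by
        rw [← Ioc_union_Ioi_eq_Ioi hs.le, setIntegral_union (Ioc_disjoint_Ioi le_rfl)
          measurableSet_Ioi (hint.mono_set Ioc_subset_Ioi_self)
          (hint.mono_set (Ioi_subset_Ioi hs.le))]
    _ ≤ s ^ (α - 1) / (α + 1) + s ^ (α - 1) / (1 - α) := add_le_add hnear hfar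
    _ = (1 / (α + 1) + 1 / (1 - α)) * s ^ (α - 1) := by ring

end MinRpow

theorem Function.Periodic.exists_forall_le_le {f : ℝ → ℝ} {T : ℝ} (hf : Function.Periodic f T)
    (hT : T ≠ 0) (hc : Continuous f) : ∃ xm xM, ∀ y, f xm ≤ f y ∧ f y ≤ f xM := by
  have hK := hf.compact_of_continuous hT hc
  obtain ⟨_, ⟨xm, rfl⟩, hmin⟩ := hK.exists_isLeast (range_nonempty f)
  obtain ⟨_, ⟨xM, rfl⟩, hmax⟩ := hK.exists_isGreatest (range_nonempty f)
  exact ⟨xm, xM, fun y => ⟨hmin ⟨y, rfl⟩, hmax ⟨y, rfl⟩⟩⟩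

theorem Function.Periodic.intervalIntegral_comp_sub_mul_eq {f g : ℝ → ℝ} {T : ℝ}
    (hf : Function.Periodic f T) (hg : Function.Periodic g T) (a x : ℝ) :
    ∫ y in a..a + T, f (x - y) * g y = ∫ z in a..a + T, f z * g (x - z) := by
  have hfg : Function.Periodic (fun z => f z * g (x - z)) T := fun z => by
    simp only [hf z, sub_add_eq_sub_sub, hg.sub_eq]
  have hsub := intervalIntegral.integral_comp_sub_left (fun z => f z * g (x - z)) x
    (a := a) (b := a + T)
  simp only [sub_sub_cancel] at hsub
  rw [hsub, ← hfg.intervalIntegral_add_eq (x - (a + T)) a, show x - (a + T) + T = x - a by ring]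

section ZeroMean

variable {a b M : ℝ} {f : ℝ → ℝ}

theorem nonneg_of_intervalIntegral_eq_zero_of_le (hab : a < b)
    (hf : IntervalIntegrable f volume a b) (h0 : ∫ x in a..b, f x = 0) (hM : ∀ x, f x ≤ M) :
    0 ≤ M := by
  have := intervalIntegral.integral_mono_on hab.le hf intervalIntegrable_const fun x _ => hM x
  rw [h0, intervalIntegral.integral_const, smul_eq_mul] at this
  exact nonneg_of_mul_nonneg_right this (sub_pos.2 hab)

theorem intervalIntegral_max_neg_le (hab : a ≤ b) (hf : Continuous f) (h0 : ∫ x in a..b, f x = 0)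
    (hM : 0 ≤ M) (hfM : ∀ x, f x ≤ M) : ∫ x in a..b, max (-f x) 0 ≤ (b - a) * M := by
  have hpos : ∫ x in a..b, max (f x) 0 ≤ (b - a) * M := by
    simpa using intervalIntegral.integral_mono_on (μ := volume) hab
      ((hf.max continuous_const).intervalIntegrable a b) intervalIntegrable_const
      fun x _ => max_le (hfM x) hM
  calc ∫ x in a..b, max (-f x) 0
      = (∫ x in a..b, max (f x) 0) - ∫ x in a..b, f x := by
        rw [← intervalIntegral.integral_sub ((hf.max continuous_const).intervalIntegrable a b)
          (hf.intervalIntegrable a b)]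
        congr 1 with x
        linarith [max_zero_sub_max_neg_zero_eq_self (f x)]
    _ ≤ (b - a) * M := by rw [h0, sub_zero]; exact hpos

end ZeroMean

namespace Kker

variable {α x t : ℝ}

noncomputable def integrand (α x t : ℝ) : ℝ :=
  t ^ (α - 1) * (exp t * cos x - 1) / (1 - 2 * exp t * cos x + exp (2 * t))

theorem periodic (α : ℝ) : Function.Periodic (Kker α) (2 * π) := by
  intro x
  have hmem : (∃ k : ℤ, x + 2 * π = 2 * π * k) ↔ ∃ k : ℤ, x = 2 * π * k :=
    ⟨fun ⟨k, hk⟩ => ⟨k - 1, by push_cast; linarith⟩,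
      fun ⟨k, hk⟩ => ⟨k + 1, by push_cast; linarith⟩⟩
  unfold Kker
  rw [cos_add_two_pi]
  by_cases h : ∃ k : ℤ, x = 2 * π * k
  · rw [if_pos (hmem.2 h), if_pos h]
  · rw [if_neg (mt hmem.1 h), if_neg h]

theorem eq_zero_of_cos_eq_one (hx : cos x = 1) : Kker α x = 0 := by
  obtain ⟨k, hk⟩ := (cos_eq_one_iff x).1 hx
  exact if_pos ⟨k, by rw [← hk]; ring⟩

theorem eq_integral_of_cos_ne_one (hx : cos x ≠ 1) :
    Kker α x = 1 / (π * Gamma α) * ∫ t in Ioi 0, integrand α x t :=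
  if_neg fun ⟨k, hk⟩ => hx ((cos_eq_one_iff x).2 ⟨k, by rw [hk]; ring⟩)

theorem measurable (α : ℝ) : Measurable (Kker α) := by
  classical
  have hint : Measurable fun x => ∫ t in Ioi 0, integrand α x t := by
    have : Measurable fun q : ℝ × ℝ => integrand α q.1 q.2 := by
      unfold integrand; fun_prop
    exact this.stronglyMeasurable.integral_prod_right'.measurable
  have hS : MeasurableSet {x : ℝ | ∃ k : ℤ, x = 2 * π * k} := by
    have : {x : ℝ | ∃ k : ℤ, x = 2 * π * k} = range fun k : ℤ => 2 * π * k := by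
      ext x; simp [eq_comm]
    exact this ▸ (countable_range _).measurableSet
  exact Measurable.ite hS measurable_const (measurable_const.mul hint)

theorem abs_integrand_le (ht : 0 < t) (hx : cos x < 1) :
    |integrand α x t| ≤
      t ^ (α - 1) * exp (-t) / 2 + min (t ^ (α - 2)) (t ^ α / (2 * (1 - cos x))) := by
  set E := exp t
  set a := 1 - cos x
  have hE : 1 < E := one_lt_exp_iff.2 ht
  have ha : 0 < a := by linarith
  have htE : t ≤ E - 1 := by linarith [add_one_le_exp t]
  have hEt : E - 1 ≤ E * t := by
    have h := add_one_le_exp (-t)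
    have hinv : E * exp (-t) = 1 := by rw [← exp_add, add_neg_cancel, exp_zero]
    nlinarith
  -- the denominator is `(E - 1)² + 2E(1 - cos x)`: each summand gives one of the bounds below
  set D := (E - 1) ^ 2 + 2 * E * a
  have hD : 1 - 2 * E * cos x + exp (2 * t) = D := by
    rw [show 2 * t = t + t by ring, exp_add]; ring
  have hDpos : 0 < D := by positivity
  have hnum : |E * cos x - 1| ≤ a + (E - 1) := by
    rw [abs_le]
    constructor <;> nlinarith [neg_one_le_cos x, cos_le_one x]
  have hcos_part : a / D ≤ exp (-t) / 2 := by
    rw [exp_neg, div_le_div_iff₀ hDpos two_pos]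
    have : a * 2 * E ≤ D := by nlinarith [sq_nonneg (E - 1)]
    calc a * 2 = a * 2 * E * E⁻¹ := by field_simp
      _ ≤ D * E⁻¹ := by gcongr
      _ = E⁻¹ * D := mul_comm _ _
  have hexp_part : (E - 1) / D ≤ min (1 / t) (t / (2 * a)) := by
    refine le_min ?_ ?_
    · rw [div_le_div_iff₀ hDpos ht]; nlinarith
    · rw [div_le_div_iff₀ hDpos (by positivity)]; nlinarith
  have htα : 0 < t ^ (α - 1) := rpow_pos_of_pos ht _
  calc |integrand α x t| = t ^ (α - 1) * (|E * cos x - 1| / D) := by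
        rw [integrand, hD, abs_div, abs_mul, abs_of_pos htα, abs_of_pos hDpos, mul_div_assoc]
    _ ≤ t ^ (α - 1) * (a / D + (E - 1) / D) := by
        rw [← add_div]; gcongr
    _ ≤ t ^ (α - 1) * (exp (-t) / 2 + min (1 / t) (t / (2 * a))) := by
        gcongr
    _ = t ^ (α - 1) * exp (-t) / 2 + min (t ^ (α - 2)) (t ^ α / (2 * a)) := by
        have h1 : t ^ (α - 1) * (1 / t) = t ^ (α - 2) := by
          rw [show α - 2 = α - 1 - 1 by ring, rpow_sub_one ht.ne' (α - 1)]; ring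
        have h2 : t ^ (α - 1) * (t / (2 * a)) = t ^ α / (2 * a) := by
          rw [rpow_sub_one ht.ne']; field_simp
        rw [mul_add, mul_min_of_nonneg _ _ htα.le, h1, h2]; ring

theorem norm_integral_integrand_le (hα : α ∈ Ioo 0 1) (hx : cos x < 1) :
    ‖∫ t in Ioi 0, integrand α x t‖ ≤
      Gamma α / 2 + (1 / (α + 1) + 1 / (1 - α)) * √(2 * (1 - cos x)) ^ (α - 1) := by
  set s := √(2 * (1 - cos x))
  have hs : 0 < s := sqrt_pos.2 (by linarith)
  have hs2 : s ^ 2 = 2 * (1 - cos x) := sq_sqrt (by linarith)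
  have hα' : α ∈ Ioo (-1) 1 := ⟨by linarith [hα.1], hα.2⟩
  have hGamma : IntegrableOn (fun t => t ^ (α - 1) * exp (-t) / 2) (Ioi 0) :=
    IntegrableOn.congr_fun ((GammaIntegral_convergent hα.1).div_const 2)
      (fun t _ => by ring) measurableSet_Ioi
  have hmin := integrableOn_Ioi_min_rpow hα' hs
  calc ‖∫ t in Ioi 0, integrand α x t‖
      ≤ ∫ t in Ioi 0, (t ^ (α - 1) * exp (-t) / 2 + min (t ^ (α - 2)) (t ^ α / s ^ 2)) := by
        refine norm_integral_le_of_norm_le (hGamma.add hmin)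
          ((ae_restrict_iff' measurableSet_Ioi).2 (.of_forall fun t ht => ?_))
        rw [norm_eq_abs, hs2]
        exact abs_integrand_le ht hx
    _ ≤ Gamma α / 2 + (1 / (α + 1) + 1 / (1 - α)) * s ^ (α - 1) := by
        rw [integral_add hGamma hmin, integral_div, Gamma_eq_integral hα.1]
        simp only [mul_comm (_ ^ (α - 1)) (exp _)]
        gcongr
        exact setIntegral_Ioi_min_rpow_le hα' hs

theorem exists_abs_le (hα : α ∈ Ioo 0 1) :
    ∃ B, ∀ x ∈ Icc (-π) π, |Kker α x| ≤ 1 / (2 * π) + B * |x| ^ (α - 1) := by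
  have hΓ : 0 < Gamma α := Gamma_pos_of_pos hα.1
  set A := (1 / (α + 1) + 1 / (1 - α)) / (π * Gamma α)
  have hA : 0 ≤ A := div_nonneg (add_nonneg (one_div_nonneg.2 (by linarith [hα.1]))
    (one_div_nonneg.2 (by linarith [hα.2]))) (by positivity)
  refine ⟨A * (2 / π) ^ (α - 1), fun x hx => ?_⟩
  rcases (cos_le_one x).eq_or_lt with hcos | hcos
  · rw [eq_zero_of_cos_eq_one hcos, abs_zero]
    positivity
  have hx0 : 0 < |x| := abs_pos.2 fun h => by simp [h] at hcos
  have hsx : 2 / π * |x| ≤ √(2 * (1 - cos x)) := by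
    refine le_sqrt_of_sq_le ?_
    have := cos_le_one_sub_mul_cos_sq (abs_le.2 hx)
    rw [mul_pow, sq_abs]
    linarith [show (2 / π) ^ 2 * x ^ 2 = 2 * (2 / π ^ 2 * x ^ 2) by ring]
  calc |Kker α x|
      = (π * Gamma α)⁻¹ * ‖∫ t in Ioi 0, integrand α x t‖ := by
        rw [eq_integral_of_cos_ne_one hcos.ne, abs_mul, one_div, abs_of_pos (by positivity),
          norm_eq_abs]
    _ ≤ (π * Gamma α)⁻¹ *
          (Gamma α / 2 + (1 / (α + 1) + 1 / (1 - α)) * √(2 * (1 - cos x)) ^ (α - 1)) := by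
        gcongr
        exact norm_integral_integrand_le hα hcos
    _ = 1 / (2 * π) + A * √(2 * (1 - cos x)) ^ (α - 1) := by
        simp only [A]; field_simp
    _ ≤ 1 / (2 * π) + A * (2 / π * |x|) ^ (α - 1) := by
        have := rpow_le_rpow_of_nonpos (mul_pos (by positivity) hx0) hsx
          (show α - 1 ≤ 0 by linarith [hα.2])
        gcongr
    _ = 1 / (2 * π) + A * (2 / π) ^ (α - 1) * |x| ^ (α - 1) := by
        rw [mul_rpow (by positivity) hx0.le, mul_assoc]

theorem intervalIntegrable (hα : α ∈ Ioo 0 1) : IntervalIntegrable (Kker α) volume (-π) π := by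
  obtain ⟨B, hB⟩ := exists_abs_le hα
  refine IntervalIntegrable.mono_fun' (g := fun x => 1 / (2 * π) + B * |x| ^ (α - 1))
    (intervalIntegrable_const.add
      ((intervalIntegrable_abs_rpow (by linarith [hα.1]) _ _).const_mul B))
    (measurable α).aestronglyMeasurable ((ae_restrict_iff' measurableSet_uIoc).2 (.of_forall ?_))
  intro x hx
  rw [uIoc_of_le (by linarith [pi_pos])] at hx
  exact hB x (Ioc_subset_Icc_self hx)

theorem abs_intervalIntegral_mul_le {α B : ℝ} {φ : ℝ → ℝ} (hα : α ∈ Ioo 0 1)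
    (hφ : Function.Periodic φ (2 * π)) (hB : ∀ y, |φ y| ≤ B) (x : ℝ) :
    |∫ y in (-π)..π, Kker α (x - y) * φ y| ≤ (∫ z in (-π)..π, |Kker α z|) * B := by
  have hconv := (periodic α).intervalIntegral_comp_sub_mul_eq hφ (-π) x
  rw [show -π + 2 * π = π by ring] at hconv
  rw [hconv, ← intervalIntegral.integral_mul_const B fun z => |Kker α z|]
  refine intervalIntegral.norm_integral_le_of_norm_le (f := fun z => Kker α z * φ (x - z))
    (by linarith [pi_pos]) (.of_forall fun z _ => ?_) ((intervalIntegrable hα).abs.mul_const B)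
  rw [norm_mul, norm_eq_abs, norm_eq_abs]
  exact mul_le_mul_of_nonneg_left (hB _) (abs_nonneg _)

end Kker

section Nonlinearity

variable {a b m M p : ℝ} {f : ℝ → ℝ}

theorem abs_le_max_of_mem_Icc {y : ℝ} (hy : y ∈ Icc (-m) M) : |y| ≤ max M m :=
  abs_le.2 ⟨by linarith [le_max_right M m, hy.1], hy.2.trans (le_max_left M m)⟩

theorem nAbs_le_of_mem_Icc {y : ℝ} (hp : 1 ≤ p) (hm : 0 ≤ m) (hM : 0 ≤ M) (hy : y ∈ Icc (-m) M) :
    nAbs p y ≤ M ^ p + m ^ (p - 1) * max (-y) 0 := by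
  unfold nAbs
  rcases le_total 0 y with hy0 | hy0
  · have : |y| ^ p ≤ M ^ p :=
      rpow_le_rpow (abs_nonneg y) (by rw [abs_of_nonneg hy0]; exact hy.2) (by linarith)
    have : 0 ≤ m ^ (p - 1) * max (-y) 0 := mul_nonneg (rpow_nonneg hm _) (le_max_right _ _)
    linarith [rpow_nonneg (abs_nonneg y) p]
  · have hpow : |y| ^ p = |y| ^ (p - 1) * -y := by
      rcases hy0.eq_or_lt with rfl | hy0
      · simp [zero_rpow (by linarith : p ≠ 0)]
      · rw [rpow_sub_one (abs_pos.2 hy0.ne).ne', abs_of_neg hy0]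
        field_simp [hy0.ne]
    rw [hpow, max_eq_left (by linarith)]
    have : |y| ^ (p - 1) ≤ m ^ (p - 1) :=
      rpow_le_rpow (abs_nonneg y) (by rw [abs_of_nonpos hy0]; linarith [hy.1]) (by linarith)
    nlinarith [rpow_nonneg hM p]

theorem intervalIntegral_nAbs_le (hp : 1 ≤ p) (hab : a ≤ b) (hf : Continuous f)
    (h0 : ∫ x in a..b, f x = 0) (hm : 0 ≤ m) (hM : 0 ≤ M) (hfmM : ∀ x, f x ∈ Icc (-m) M) :
    ∫ x in a..b, nAbs p (f x) ≤ (b - a) * (M ^ p + m ^ (p - 1) * M) := by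
  have hneg : Continuous fun x => max (-f x) 0 := hf.neg.max continuous_const
  calc ∫ x in a..b, nAbs p (f x)
      ≤ ∫ x in a..b, (M ^ p + m ^ (p - 1) * max (-f x) 0) :=
        intervalIntegral.integral_mono_on hab
          ((hf.abs.rpow_const fun _ => .inr (by linarith)).intervalIntegrable a b)
          ((continuous_const.add (continuous_const.mul hneg)).intervalIntegrable a b)
          fun x _ => nAbs_le_of_mem_Icc hp hm hM (hfmM x)
    _ = (b - a) * M ^ p + m ^ (p - 1) * ∫ x in a..b, max (-f x) 0 := by
        rw [intervalIntegral.integral_add (f := fun _ => M ^ p)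
          (g := fun x => m ^ (p - 1) * max (-f x) 0) intervalIntegrable_const
          ((continuous_const.mul hneg).intervalIntegrable a b), intervalIntegral.integral_const,
          intervalIntegral.integral_const_mul, smul_eq_mul]
    _ ≤ (b - a) * M ^ p + m ^ (p - 1) * ((b - a) * M) := by
        gcongr
        exact intervalIntegral_max_neg_le hab hf h0 hM fun x => (hfmM x).2
    _ = (b - a) * (M ^ p + m ^ (p - 1) * M) := by ring

theorem nAbs'_eq_nSgn' {y : ℝ} (hp : p ≠ 1) (hy : 0 ≤ y) : nAbs' p y = nSgn' p y := by
  unfold nAbs' nSgn'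
  rw [abs_of_nonneg hy]
  rcases hy.eq_or_lt with rfl | hy
  · simp [zero_rpow (sub_ne_zero.2 hp)]
  · rw [show p - 1 = 1 + (p - 2) by ring, rpow_add hy, rpow_one, mul_assoc]

theorem abs_le_of_nSgn'_le {c y : ℝ} (hp : 1 < p) (h : nSgn' p y ≤ c) :
    |y| ≤ (1 + c) ^ (1 / (p - 1)) := by
  have hpow : 0 ≤ |y| ^ (p - 1) := rpow_nonneg (abs_nonneg y) _
  unfold nSgn' at h
  rw [one_div, le_rpow_inv_iff_of_pos (abs_nonneg y) (by nlinarith) (by linarith)]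
  nlinarith

end Nonlinearity

theorem one_half_rpow_lt_one_half {p : ℝ} (hp : 1 < p) : (1 / 2 : ℝ) ^ p < 1 / 2 := by
  simpa using rpow_lt_rpow_of_exponent_gt (by norm_num : (0 : ℝ) < 1 / 2) (by norm_num) hp

theorem le_two_mul_add_of_mul_add_rpow_le {p c L M m : ℝ} (hp : 1 < p) (hc : 0 ≤ c) (hL : 0 ≤ L)
    (hM : 0 ≤ M) (h : c * m + m ^ p ≤ M ^ p + m ^ (p - 1) * M + L * max M m) :
    m ≤ 2 * M + (L / (1 / 2 - (1 / 2) ^ p)) ^ (1 / (p - 1)) := by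
  set β : ℝ := 1 / 2 - (1 / 2) ^ p
  have hβ : 0 < β := sub_pos.2 (one_half_rpow_lt_one_half hp)
  have hC : 0 ≤ (L / β) ^ (1 / (p - 1)) := rpow_nonneg (div_nonneg hL hβ.le) _
  rcases le_or_gt m (2 * M) with hmM | hmM
  · linarith
  have hm : 0 < m := by linarith
  have hpow : m ^ p = m ^ (p - 1) * m := by rw [rpow_sub_one hm.ne']; field_simp
  have hMp : M ^ p ≤ (1 / 2) ^ p * m ^ p := by
    rw [← mul_rpow (by norm_num) hm.le]
    exact rpow_le_rpow hM (by linarith) (by linarith)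
  have hmpM : m ^ (p - 1) * M ≤ 1 / 2 * m ^ p := by
    rw [hpow]; nlinarith [rpow_nonneg hm.le (p - 1)]
  rw [max_eq_right (by linarith)] at h
  have hmp : m ^ (p - 1) * β * m ≤ L * m := by
    have hβm : m ^ (p - 1) * β * m = (1 / 2 - (1 / 2) ^ p) * m ^ p := by rw [hpow]; ring
    linarith [mul_nonneg hc hm.le]
  have hm' : m ≤ (L / β) ^ (1 / (p - 1)) := by
    rw [one_div, le_rpow_inv_iff_of_pos hm.le (div_nonneg hL hβ.le) (by linarith), le_div_iff₀ hβ]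
    exact le_of_mul_le_mul_right hmp hm
  linarith

noncomputable def steadyBoundConst (α p : ℝ) : ℝ :=
  2 + ((∫ z in (-π)..π, |Kker α z|) / (1 / 2 - (1 / 2) ^ p)) ^ (1 / (p - 1))

theorem two_le_steadyBoundConst {α p : ℝ} (hp : 1 < p) : 2 ≤ steadyBoundConst α p :=
  le_add_of_nonneg_right <| rpow_nonneg (div_nonneg
    (intervalIntegral.integral_nonneg (by linarith [pi_pos]) fun _ _ => abs_nonneg _)
    (sub_pos.2 (one_half_rpow_lt_one_half hp)).le) _

theorem mul_add_rpow_le_of_isSteadySolution_nAbs {α p c m M xm : ℝ} {φ : ℝ → ℝ}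
    (hα : α ∈ Ioo 0 1) (hp : 1 ≤ p) (hφ : IsSteadySolution α c (nAbs p) φ) (hm : 0 ≤ m)
    (hM : 0 ≤ M) (hxm : φ xm = -m) (hrange : ∀ y, φ y ∈ Icc (-m) M) :
    c * m + m ^ p ≤ M ^ p + m ^ (p - 1) * M + (∫ z in (-π)..π, |Kker α z|) * max M m := by
  obtain ⟨hcont, hper, hmean, heq⟩ := hφ
  have hπ := pi_pos
  have hbound : ∀ y, |φ y| ≤ max M m := fun y => abs_le_max_of_mem_Icc (hrange y)
  have hmean_n : 1 / (2 * π) * ∫ y in (-π)..π, nAbs p (φ y) ≤ M ^ p + m ^ (p - 1) * M := by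
    have := intervalIntegral_nAbs_le hp (by linarith) hcont hmean hm hM hrange
    rw [show π - -π = 2 * π by ring] at this
    rw [div_mul_eq_mul_div, one_mul, div_le_iff₀ (by positivity)]
    linarith
  have hconv := Kker.abs_intervalIntegral_mul_le hα hper hbound xm
  rw [heq xm, hxm, nAbs, abs_neg, abs_of_nonneg hm] at hconv
  linarith [(abs_le.1 hconv).1]

theorem abs_le_of_isSteadySolution_nAbs {α p c : ℝ} {φ : ℝ → ℝ} (hα : α ∈ Ioo 0 1) (hp : 1 < p)
    (hc : 0 ≤ c) (hφ : IsSteadySolution α c (nAbs p) φ) (hder : ∀ x, nAbs' p (φ x) ≤ c) (x : ℝ) :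
    |φ x| ≤ steadyBoundConst α p * (1 + c) ^ (1 / (p - 1)) := by
  have ⟨hcont, hper, hmean, _⟩ := hφ
  obtain ⟨xm, xM, hext⟩ := hper.exists_forall_le_le two_pi_pos.ne' hcont
  have hπ := pi_pos
  have hint := hcont.intervalIntegrable (μ := volume) (-π) π
  set M := φ xM
  set m := -φ xm with hm_def
  have hxm : φ xm = -m := by rw [hm_def, neg_neg]
  have hM : 0 ≤ M := nonneg_of_intervalIntegral_eq_zero_of_le (by linarith) hint hmean
    fun y => (hext y).2
  have hm : 0 ≤ m := nonneg_of_intervalIntegral_eq_zero_of_le (by linarith) hint.neg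
    (by simp only [Pi.neg_apply, intervalIntegral.integral_neg, hmean, neg_zero])
    fun y => neg_le_neg (hext y).1
  have hrange : ∀ y, φ y ∈ Icc (-m) M := fun y => ⟨hxm ▸ (hext y).1, (hext y).2⟩
  have hMc : M ≤ (1 + c) ^ (1 / (p - 1)) := by
    have := abs_le_of_nSgn'_le hp (nAbs'_eq_nSgn' hp.ne' hM ▸ hder xM)
    rwa [abs_of_nonneg hM] at this
  have hmM := le_two_mul_add_of_mul_add_rpow_le hp hc
    (intervalIntegral.integral_nonneg (by linarith) fun _ _ => abs_nonneg _) hM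
    (mul_add_rpow_le_of_isSteadySolution_nAbs hα hp.le hφ hm hM hxm hrange)
  have hR : 1 ≤ (1 + c) ^ (1 / (p - 1)) := one_le_rpow (by linarith) (by positivity)
  have hC2 := two_le_steadyBoundConst (α := α) hp
  calc |φ x| ≤ max M m := abs_le_max_of_mem_Icc (hrange x)
    _ ≤ 2 * M + (steadyBoundConst α p - 2) := max_le (by linarith) (by
        rw [steadyBoundConst, add_sub_cancel_left]; exact hmM)
    _ ≤ steadyBoundConst α p * (1 + c) ^ (1 / (p - 1)) := by nlinarith

/-- Uniform a priori bound: there is `C = C(α,p) > 0` such that every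
steady solution (for either nonlinearity) with `n′(φ) ≤ c` everywhere satisfies
`‖φ‖_∞ ≤ C (1 + c)^{1/(p−1)}`. -/
theorem statement8 (α p : ℝ) (hα : α ∈ Set.Ioo (0:ℝ) 1) (hp : 1 < p) :
    ∃ C > 0, ∀ (c : ℝ) (φ : ℝ → ℝ), 0 < c →
      ((IsSteadySolution α c (nAbs p) φ ∧ ∀ x, nAbs' p (φ x) ≤ c) ∨
       (IsSteadySolution α c (nSgn p) φ ∧ ∀ x, nSgn' p (φ x) ≤ c)) →
      ∀ x : ℝ, |φ x| ≤ C * (1 + c) ^ (1 / (p - 1)) := by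
  have hC := two_le_steadyBoundConst (α := α) hp
  refine ⟨steadyBoundConst α p, by linarith, fun c φ hc hφ x => ?_⟩
  rcases hφ with ⟨hφ, hder⟩ | ⟨-, hder⟩
  · exact abs_le_of_isSteadySolution_nAbs hα hp hc.le hφ hder x
  · exact (abs_le_of_nSgn'_le hp (hder x)).trans
      (le_mul_of_one_le_left (rpow_nonneg (by linarith) _) (by linarith))
end

section
/- Let α ∈ (0,1) and p > 1 be real. If c ≥ (p/(p−1))·∫_{−π}^{π}|K_α(x)|dx, then every steady solution φ with speed c (for either nonlinearity, case abs or case sgn) satisfying n′(φ(x)) ≤ c for all x ∈ ℝ is identically zero. -/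
/-! Multiplying the equation by `φ` and integrating over a period, the zero mean kills the
constant term: `∫ φ (K_α ∗ φ) = c ∫ φ² - ∫ φ n(φ)`. By `2|ab| ≤ a² + b²` and periodicity the left
side is at most `‖K_α‖₁ ∫ φ²`, while Euler's relation `p z n(z) = z² n'(z)` and `n'(φ) ≤ c` give
`∫ φ n(φ) ≤ (c/p) ∫ φ²`. Since `‖K_α‖₁ ≤ c - c/p`, this forces `φ n(φ) = (c/p) φ²` pointwise, so
`|φ|` only takes the values `0` and `(c/p)^(1/(p-1))`; a continuous function with finitely many
values is constant, and the zero mean makes it vanish. The kernel is integrable because the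
integrand defining `K_α(x)` is bounded by `t^(α-1) / max (2|x|/π) t`, whence
`|K_α(x)| ≲ |x|^(α-1)`. -/

open Real MeasureTheory Set Filter Topology

theorem Kker_eq_integral {α x : ℝ} (hx : ¬ ∃ k : ℤ, x = 2 * π * k) :
    Kker α x = (1 / (π * Real.Gamma α)) *
      ∫ t in Ioi (0:ℝ), t ^ (α - 1) * (exp t * cos x - 1) /
        (1 - 2 * exp t * cos x + exp (2 * t)) := by
  simp only [Kker, if_neg hx]

theorem Kker_periodic (α : ℝ) : Function.Periodic (Kker α) (2 * π) := by
  intro x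
  have hcond : (∃ k : ℤ, x + 2 * π = 2 * π * k) ↔ ∃ k : ℤ, x = 2 * π * k :=
    ⟨fun ⟨k, hk⟩ => ⟨k - 1, by push_cast; linarith⟩,
      fun ⟨k, hk⟩ => ⟨k + 1, by push_cast; linarith⟩⟩
  simp only [Kker, cos_add_two_pi]
  congr 1
  exact propext hcond

theorem measurable_Kker (α : ℝ) : Measurable (Kker α) := by
  have hS : MeasurableSet {x : ℝ | ∃ k : ℤ, x = 2 * π * k} := by
    have : {x : ℝ | ∃ k : ℤ, x = 2 * π * k} = range (fun k : ℤ => 2 * π * k) := by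
      ext x; simp [eq_comm]
    exact this ▸ (countable_range _).measurableSet
  have hF : StronglyMeasurable (fun q : ℝ × ℝ => q.2 ^ (α - 1) * (exp q.2 * cos q.1 - 1) /
      (1 - 2 * exp q.2 * cos q.1 + exp (2 * q.2))) :=
    Measurable.stronglyMeasurable (by fun_prop)
  exact Measurable.ite hS measurable_const
    ((hF.integral_prod_right' (ν := volume.restrict (Ioi 0))).measurable.const_mul _)

theorem abs_Kker_integrand_le {α x t : ℝ} (hxπ : |x| ≤ π) (ht : 0 < t) :
    |t ^ (α - 1) * (exp t * cos x - 1) / (1 - 2 * exp t * cos x + exp (2 * t))| ≤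
      t ^ (α - 1) / max (2 * |x| / π) t := by
  -- `D = (eᵗ cos x - 1)² + (eᵗ sin x)² = (eᵗ - 1)² + 2 eᵗ (1 - cos x)`, and Jordan's inequality
  -- bounds `1 - cos x` from below by `2 x² / π²`.
  have hE : t + 1 ≤ exp t := add_one_le_exp t
  have hE2 : exp (2 * t) = exp t ^ 2 := by rw [← exp_nat_mul]; norm_num
  set D := 1 - 2 * exp t * cos x + exp (2 * t)
  have hcos : cos x ≤ 1 := cos_le_one x
  have hN : (exp t * cos x - 1) ^ 2 ≤ D := by
    nlinarith [sin_sq_add_cos_sq x, sq_nonneg (exp t * sin x)]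
  have hsq : ∀ s, s ^ 2 ≤ (exp t - 1) ^ 2 + 2 * (1 - cos x) → s ^ 2 ≤ D := fun s hs => by
    nlinarith
  have hb : (2 * |x| / π) ^ 2 ≤ D := by
    refine hsq _ ?_
    have hJordan := cos_le_one_sub_mul_cos_sq hxπ
    have : (2 * |x| / π) ^ 2 = 2 * (2 / π ^ 2 * x ^ 2) := by
      rw [div_pow, mul_pow, sq_abs]; ring
    nlinarith [sq_nonneg (exp t - 1)]
  have htD : t ^ 2 ≤ D := hsq t (by nlinarith)
  set m := max (2 * |x| / π) t
  have hm : 0 < m := lt_max_of_lt_right ht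
  have hmD : m ^ 2 ≤ D := by rcases max_choice (2 * |x| / π) t with h | h <;> simpa [m, h]
  have hD : 0 < D := lt_of_lt_of_le (by positivity) hmD
  have hmN : m * |exp t * cos x - 1| ≤ D := by
    nlinarith [sq_nonneg (m - |exp t * cos x - 1|), sq_abs (exp t * cos x - 1)]
  rw [abs_div, abs_mul, abs_of_pos (rpow_pos_of_pos ht _), abs_of_pos hD, div_le_div_iff₀ hD hm,
    mul_assoc, mul_comm |_|]
  gcongr

theorem integrableOn_rpow_div_max {α b : ℝ} (hα : α ∈ Ioo (0:ℝ) 1) (hb : 0 < b) :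
    IntegrableOn (fun t => t ^ (α - 1) / max b t) (Ioi 0) := by
  rw [← Ioc_union_Ioi_eq_Ioi hb.le]
  refine IntegrableOn.union ?_ ?_
  · have h := (intervalIntegrable_iff_integrableOn_Ioc_of_le hb.le).1
      (intervalIntegral.intervalIntegrable_rpow' (r := α - 1) (by linarith [hα.1]))
    refine IntegrableOn.congr_fun (h.div_const b) (fun t ht => ?_) measurableSet_Ioc
    simp [max_eq_left ht.2]
  · refine (integrableOn_Ioi_rpow_of_lt (show α - 2 < -1 by linarith [hα.2]) hb).congr_fun
      (fun t (ht : b < t) => ?_) measurableSet_Ioi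
    rw [max_eq_right ht.le, ← rpow_sub_one (hb.trans ht).ne']
    ring_nf

theorem integral_rpow_div_max {α b : ℝ} (hα : α ∈ Ioo (0:ℝ) 1) (hb : 0 < b) :
    ∫ t in Ioi 0, t ^ (α - 1) / max b t = b ^ (α - 1) * (1 / α + 1 / (1 - α)) := by
  obtain ⟨hα0, hα1⟩ := hα
  have hint := integrableOn_rpow_div_max ⟨hα0, hα1⟩ hb
  rw [← Ioc_union_Ioi_eq_Ioi hb.le, setIntegral_union (Ioc_disjoint_Ioi le_rfl) measurableSet_Ioi
    (hint.mono_set Ioc_subset_Ioi_self) (hint.mono_set (Ioi_subset_Ioi hb.le))]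
  have h₁ : ∫ t in Ioc 0 b, t ^ (α - 1) / max b t = b ^ (α - 1) / α := by
    rw [setIntegral_congr_fun measurableSet_Ioc (g := fun t => t ^ (α - 1) / b)
      (fun t ht => by simp [max_eq_left ht.2]), integral_div,
      ← intervalIntegral.integral_of_le hb.le, integral_rpow (Or.inl (by linarith)),
      sub_add_cancel, zero_rpow hα0.ne', sub_zero, div_div, mul_comm α b, ← div_div,
      ← rpow_sub_one hb.ne']
  have h₂ : ∫ t in Ioi b, t ^ (α - 1) / max b t = b ^ (α - 1) / (1 - α) := by
    rw [setIntegral_congr_fun measurableSet_Ioi (g := fun t => t ^ (α - 2)) (fun t ht => ?_),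
      integral_Ioi_rpow_of_lt (by linarith) hb]
    · rw [show α - 2 + 1 = α - 1 by ring, neg_div, ← div_neg, neg_sub]
    · rw [max_eq_right (le_of_lt ht), ← rpow_sub_one (hb.trans ht).ne']
      ring_nf
  rw [h₁, h₂]
  ring

theorem abs_Kker_le {α x : ℝ} (hα : α ∈ Ioo (0:ℝ) 1) (hx0 : x ≠ 0) (hxπ : |x| ≤ π) :
    |Kker α x| ≤
      (π * Gamma α)⁻¹ * (2 / π) ^ (α - 1) * (1 / α + 1 / (1 - α)) * |x| ^ (α - 1) := by
  have hx : ¬ ∃ k : ℤ, x = 2 * π * k := by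
    rintro ⟨k, rfl⟩
    have hk : (1:ℝ) ≤ |(k:ℝ)| := by
      rw [← Int.cast_abs]; exact_mod_cast Int.one_le_abs (by rintro rfl; simp at hx0)
    rw [abs_mul, abs_of_pos (by positivity : (0:ℝ) < 2 * π)] at hxπ
    nlinarith [pi_pos]
  have hΓ : 0 < π * Gamma α := mul_pos pi_pos (Gamma_pos_of_pos hα.1)
  have hb : 0 < 2 * |x| / π := by positivity
  rw [Kker_eq_integral hx, abs_mul, abs_of_pos (by positivity), one_div]
  calc (π * Gamma α)⁻¹ * |∫ t in Ioi (0:ℝ), t ^ (α - 1) * (exp t * cos x - 1) /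
        (1 - 2 * exp t * cos x + exp (2 * t))|
      ≤ (π * Gamma α)⁻¹ * ∫ t in Ioi 0, t ^ (α - 1) / max (2 * |x| / π) t := by
        gcongr
        rw [← norm_eq_abs]
        refine norm_integral_le_of_norm_le (integrableOn_rpow_div_max hα hb)
          (ae_restrict_of_forall_mem measurableSet_Ioi fun t ht => ?_)
        exact (norm_eq_abs _).trans_le (abs_Kker_integrand_le hxπ ht)
    _ = _ := by
        rw [integral_rpow_div_max hα hb, mul_div_right_comm,
          mul_rpow (by positivity) (abs_nonneg x)]
        ring

theorem intervalIntegrable_Kker {α : ℝ} (hα : α ∈ Ioo (0:ℝ) 1) :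
    IntervalIntegrable (Kker α) volume (-π) π := by
  refine ((intervalIntegrable_abs_rpow (r := α - 1) (by linarith [hα.1]) _ _).const_mul
    ((π * Gamma α)⁻¹ * (2 / π) ^ (α - 1) * (1 / α + 1 / (1 - α)))).mono_fun'
    (measurable_Kker α).aestronglyMeasurable ?_
  rw [uIoc_of_le (by linarith [pi_pos])]
  filter_upwards [ae_restrict_mem measurableSet_Ioc, ae_restrict_of_ae (Measure.ae_ne volume 0)]
    with x hxI hx0
  exact abs_Kker_le hα hx0 (abs_le.2 ⟨hxI.1.le, hxI.2⟩)

section PeriodicConvolution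

variable {T : ℝ}

theorem Function.Periodic.intervalIntegral_comp_sub_right {E : Type*} [NormedAddCommGroup E]
    [NormedSpace ℝ E] {f : ℝ → E} (hf : Function.Periodic f T) (a u : ℝ) :
    ∫ x in a..a + T, f (x - u) = ∫ x in a..a + T, f x := by
  rw [intervalIntegral.integral_comp_sub_right, add_sub_right_comm]
  exact hf.intervalIntegral_add_eq _ _

theorem Function.Periodic.intervalIntegral_comp_sub_left {E : Type*} [NormedAddCommGroup E]
    [NormedSpace ℝ E] {f : ℝ → E} (hf : Function.Periodic f T) (a x : ℝ) :
    ∫ y in a..a + T, f (x - y) = ∫ y in a..a + T, f y := by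
  rw [intervalIntegral.integral_comp_sub_left, show x - a = x - (a + T) + T by ring]
  exact hf.intervalIntegral_add_eq _ _

theorem abs_intervalIntegral_mul_comp_sub_le {φ : ℝ → ℝ} (hT : 0 ≤ T) (hφ : Continuous φ)
    (hφp : Function.Periodic φ T) (a u : ℝ) :
    |∫ x in a..a + T, φ x * φ (x - u)| ≤ ∫ x in a..a + T, φ x ^ 2 := by
  have hle : a ≤ a + T := le_add_of_nonneg_right hT
  have hφu : Continuous fun x => φ (x - u) := hφ.comp (continuous_sub_right u)
  have hφ2 : IntervalIntegrable (fun x => φ x ^ 2) volume a (a + T) :=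
    (hφ.pow 2).intervalIntegrable _ _
  have hφu2 : IntervalIntegrable (fun x => φ (x - u) ^ 2) volume a (a + T) :=
    (hφu.pow 2).intervalIntegrable _ _
  calc |∫ x in a..a + T, φ x * φ (x - u)|
      ≤ ∫ x in a..a + T, |φ x * φ (x - u)| := intervalIntegral.abs_integral_le_integral_abs hle
    _ ≤ ∫ x in a..a + T, (φ x ^ 2 + φ (x - u) ^ 2) / 2 := by
        refine intervalIntegral.integral_mono_on hle ((hφ.mul hφu).abs.intervalIntegrable _ _)
          ((hφ2.add hφu2).div_const 2) fun x _ => ?_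
        rw [abs_mul, ← sq_abs (φ x), ← sq_abs (φ (x - u))]
        linarith [two_mul_le_add_sq |φ x| |φ (x - u)|]
    _ = ∫ x in a..a + T, φ x ^ 2 := by
        rw [intervalIntegral.integral_div, intervalIntegral.integral_add hφ2 hφu2,
          (hφp.comp (· ^ 2)).intervalIntegral_comp_sub_right (f := fun x => φ x ^ 2) a u]
        ring

theorem intervalIntegral_mul_intervalIntegral_comp_sub_le {K φ : ℝ → ℝ} {a : ℝ} (hT : 0 < T)
    (hK : Function.Periodic K T) (hKi : IntervalIntegrable K volume a (a + T))
    (hφ : Continuous φ) (hφp : Function.Periodic φ T) :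
    ∫ x in a..a + T, φ x * ∫ y in a..a + T, K (x - y) * φ y ≤
      (∫ x in a..a + T, |K x|) * ∫ x in a..a + T, φ x ^ 2 := by
  have hle : a ≤ a + T := by linarith
  -- By Fubini the left side is `∫ K(u) ρ(u) du` with the autocorrelation
  -- `ρ(u) = ∫ φ(x) φ(x - u) dx`, and `|ρ(u)| ≤ ∫ φ²`.
  set μ := volume.restrict (Ioc a (a + T))
  have hconv : ∀ x, ∫ y in a..a + T, K (x - y) * φ y = ∫ u in a..a + T, K u * φ (x - u) :=
    fun x => by simpa only [Pi.mul_apply, sub_sub_cancel] using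
      (hK.mul (hφp.const_sub x)).intervalIntegral_comp_sub_left a x
  obtain ⟨C, hC⟩ :=
    isBounded_iff_forall_norm_le.1 (hφp.compact_of_continuous hT.ne' hφ).isBounded
  have hint : Integrable (fun z : ℝ × ℝ => φ z.1 * (K z.2 * φ (z.1 - z.2))) (μ.prod μ) := by
    have hK' : Integrable K μ := (intervalIntegrable_iff_integrableOn_Ioc_of_le hle).1 hKi
    refine ((hK'.comp_snd μ).bdd_mul (f := fun z : ℝ × ℝ => φ z.1 * φ (z.1 - z.2))
      (c := C * C) (Continuous.aestronglyMeasurable (by fun_prop)) (ae_of_all _ fun z => ?_)).congr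
      (ae_of_all _ fun z => by ring)
    rw [norm_mul]
    exact mul_le_mul (hC _ (mem_range_self _)) (hC _ (mem_range_self _)) (norm_nonneg _)
      ((norm_nonneg _).trans (hC _ (mem_range_self 0)))
  have hswap : ∫ x in a..a + T, φ x * ∫ u in a..a + T, K u * φ (x - u) =
      ∫ u in a..a + T, K u * ∫ x in a..a + T, φ x * φ (x - u) := by
    simp only [intervalIntegral.integral_of_le hle, ← integral_const_mul]
    rw [integral_integral_swap hint]
    exact integral_congr_ae (ae_of_all _ fun u => integral_congr_ae (ae_of_all _ fun x => by ring))
  rw [intervalIntegral.integral_congr fun x _ => by rw [hconv x], hswap,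
    ← intervalIntegral.integral_mul_const]
  refine (le_abs_self _).trans ((norm_eq_abs _).symm.trans_le
    (intervalIntegral.norm_integral_le_of_norm_le hle (ae_of_all _ fun u _ => ?_)
      (hKi.abs.mul_const _)))
  rw [norm_mul, norm_eq_abs, norm_eq_abs]
  exact mul_le_mul_of_nonneg_left (abs_intervalIntegral_mul_comp_sub_le hT.le hφ hφp a u)
    (abs_nonneg _)

end PeriodicConvolution

theorem Function.Periodic.eq_zero_of_nonneg_of_intervalIntegral_eq_zero {g : ℝ → ℝ} {a T : ℝ}
    (hT : 0 < T) (hg : Function.Periodic g T) (hgc : Continuous g) (hnn : ∀ x, 0 ≤ g x)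
    (h : ∫ x in a..a + T, g x = 0) (x : ℝ) : g x = 0 := by
  obtain ⟨y, hy, hxy⟩ := hg.exists_mem_Ico hT x a
  rw [hxy]
  refine le_antisymm (not_lt.1 fun hpos => ?_) (hnn y)
  have := intervalIntegral.integral_lt_integral_of_continuousOn_of_le_of_exists_lt
    (by linarith) continuousOn_const hgc.continuousOn (fun x _ => hnn x)
    ⟨y, Ico_subset_Icc_self hy, hpos⟩
  simp [h] at this

theorem eq_zero_of_countable_range {φ : ℝ → ℝ} {a b : ℝ} (hab : a ≠ b) (hφ : Continuous φ)
    (hrange : (range φ).Countable) (hmean : ∫ x in a..b, φ x = 0) (x : ℝ) : φ x = 0 := by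
  have hconst : ∀ y, φ y = φ a := fun y =>
    hrange.isTotallyDisconnected _ subset_rfl (isPreconnected_range hφ)
      (mem_range_self y) (mem_range_self a)
  rw [intervalIntegral.integral_congr fun y _ => hconst y, intervalIntegral.integral_const,
    smul_eq_mul] at hmean
  rw [hconst x]
  exact (mul_eq_zero.1 hmean).resolve_left (sub_ne_zero.2 hab.symm)

theorem IsSteadySolution.integral_mul_conv_eq {α c : ℝ} {n φ : ℝ → ℝ}
    (hsol : IsSteadySolution α c n φ) (hn : Continuous n) :
    ∫ x in (-π)..π, φ x * ∫ y in (-π)..π, Kker α (x - y) * φ y =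
      c * (∫ x in (-π)..π, φ x ^ 2) - ∫ x in (-π)..π, φ x * n (φ x) := by
  obtain ⟨hφ, -, hmean, heq⟩ := hsol
  set nbar := 1 / (2 * π) * ∫ y in (-π)..π, n (φ y)
  have hpt : ∀ x, φ x * ∫ y in (-π)..π, Kker α (x - y) * φ y =
      c * φ x ^ 2 - φ x * n (φ x) + nbar * φ x := fun x => by rw [heq x]; ring
  have hφ2 : IntervalIntegrable (fun x => φ x ^ 2) volume (-π) π :=
    (hφ.pow 2).intervalIntegrable _ _
  have hG : IntervalIntegrable (fun x => φ x * n (φ x)) volume (-π) π :=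
    (hφ.mul (hn.comp hφ)).intervalIntegrable _ _
  rw [intervalIntegral.integral_congr fun x _ => hpt x,
    intervalIntegral.integral_add ((hφ2.const_mul c).sub hG)
      ((hφ.intervalIntegrable _ _).const_mul nbar),
    intervalIntegral.integral_sub (hφ2.const_mul c) hG,
    intervalIntegral.integral_const_mul, intervalIntegral.integral_const_mul, hmean,
    mul_zero, add_zero]

theorem IsSteadySolution.mul_eq_of_mul_le {α c l : ℝ} {n φ : ℝ → ℝ} (hα : α ∈ Ioo (0:ℝ) 1)
    (hsol : IsSteadySolution α c n φ) (hn : Continuous n)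
    (hI : ∫ x in (-π)..π, |Kker α x| ≤ c - l) (hle : ∀ x, φ x * n (φ x) ≤ l * φ x ^ 2) (x : ℝ) :
    φ x * n (φ x) = l * φ x ^ 2 := by
  obtain ⟨hφ, hφp, -, -⟩ := id hsol
  have hπ : -π + 2 * π = π := by ring
  have hφ2 : IntervalIntegrable (fun x => φ x ^ 2) volume (-π) π :=
    (hφ.pow 2).intervalIntegrable _ _
  have hG : IntervalIntegrable (fun x => φ x * n (φ x)) volume (-π) π :=
    (hφ.mul (hn.comp hφ)).intervalIntegrable _ _
  have hconv := intervalIntegral_mul_intervalIntegral_comp_sub_le (a := -π) two_pi_pos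
    (Kker_periodic α) (by rw [hπ]; exact intervalIntegrable_Kker hα) hφ hφp
  rw [hπ, hsol.integral_mul_conv_eq hn] at hconv
  have hS : 0 ≤ ∫ x in (-π)..π, φ x ^ 2 :=
    intervalIntegral.integral_nonneg (by linarith [pi_pos]) fun x _ => sq_nonneg _
  have hGS : ∫ x in (-π)..π, φ x * n (φ x) ≤ l * ∫ x in (-π)..π, φ x ^ 2 := by
    rw [← intervalIntegral.integral_const_mul]
    exact intervalIntegral.integral_mono_on (by linarith [pi_pos]) hG (hφ2.const_mul l)
      fun x _ => hle x
  have hzero : ∫ x in (-π)..π, (l * φ x ^ 2 - φ x * n (φ x)) = 0 := by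
    rw [intervalIntegral.integral_sub (hφ2.const_mul l) hG, intervalIntegral.integral_const_mul]
    nlinarith [mul_le_mul_of_nonneg_right hI hS]
  have := Function.Periodic.eq_zero_of_nonneg_of_intervalIntegral_eq_zero
    (g := fun x => l * φ x ^ 2 - φ x * n (φ x)) two_pi_pos
    (hφp.comp fun y => l * y ^ 2 - y * n y) (by fun_prop) (fun x => sub_nonneg.2 (hle x))
    (by rwa [hπ]) x
  linarith

theorem eq_zero_or_abs_eq_of_euler {p c z a a' : ℝ} (hp : 1 < p)
    (heuler : p * (z * a) = z ^ 2 * a') (ha' : |a'| = p * |z| ^ (p - 1))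
    (h : z * a = c / p * z ^ 2) : z = 0 ∨ |z| = (|c| / p) ^ (p - 1)⁻¹ := by
  have hp0 : p ≠ 0 := by linarith
  have hz : z ^ 2 * (a' - c) = 0 := by
    rw [h, ← mul_assoc, mul_div_cancel₀ c hp0] at heuler
    linear_combination -heuler
  refine (mul_eq_zero.1 hz).imp (pow_eq_zero_iff two_ne_zero).1 fun ha => ?_
  rw [← rpow_rpow_inv (abs_nonneg z) (by linarith : p - 1 ≠ 0),
    ← mul_div_cancel_left₀ (|z| ^ (p - 1)) hp0, ← ha', sub_eq_zero.1 ha]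

theorem IsSteadySolution.eq_zero {α c p : ℝ} {n n' φ : ℝ → ℝ} (hα : α ∈ Ioo (0:ℝ) 1)
    (hp : 1 < p) (hbig : (p / (p - 1)) * (∫ x in (-π)..π, |Kker α x|) ≤ c)
    (hn : Continuous n) (heuler : ∀ z, p * (z * n z) = z ^ 2 * n' z)
    (hn' : ∀ z, |n' z| = p * |z| ^ (p - 1))
    (hsol : IsSteadySolution α c n φ) (hadm : ∀ x, n' (φ x) ≤ c) (x : ℝ) : φ x = 0 := by
  have hp0 : 0 < p := by linarith
  have hI : ∫ x in (-π)..π, |Kker α x| ≤ c - c / p := by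
    rw [div_mul_eq_mul_div, div_le_iff₀ (by linarith)] at hbig
    field_simp
    linarith
  have hle : ∀ x, φ x * n (φ x) ≤ c / p * φ x ^ 2 := fun x => by
    rw [div_mul_eq_mul_div, le_div_iff₀ hp0, mul_comm _ p, heuler, mul_comm c]
    exact mul_le_mul_of_nonneg_left (hadm x) (sq_nonneg _)
  have heq := hsol.mul_eq_of_mul_le hα hn hI hle
  have hrange : range φ ⊆ {0, (|c| / p) ^ (p - 1)⁻¹, -(|c| / p) ^ (p - 1)⁻¹} := by
    rintro _ ⟨y, rfl⟩
    rcases eq_zero_or_abs_eq_of_euler hp (heuler (φ y)) (hn' (φ y)) (heq y) with h | h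
    · exact Or.inl h
    · rcases eq_or_eq_neg_of_abs_eq h with h | h <;> simp [h]
  exact eq_zero_of_countable_range (by linarith [pi_pos]) hsol.1
    ((toFinite _).subset hrange).countable hsol.2.2.1 x

theorem continuous_nAbs {p : ℝ} (hp : 0 ≤ p) : Continuous (nAbs p) :=
  continuous_abs.rpow_const fun _ => Or.inr hp

theorem continuous_nSgn {p : ℝ} (hp : 1 ≤ p) : Continuous (nSgn p) :=
  continuous_id.mul (continuous_abs.rpow_const fun _ => Or.inr (by linarith))

theorem nAbs_euler (p x : ℝ) : p * (x * nAbs p x) = x ^ 2 * nAbs' p x := by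
  rcases eq_or_ne x 0 with rfl | hx
  · simp
  have : |x| ^ p = x ^ 2 * |x| ^ (p - 2) := by
    rw [← sq_abs, ← rpow_two, ← rpow_add (abs_pos.2 hx), add_sub_cancel]
  rw [nAbs, nAbs', this]
  ring

theorem nSgn_euler (p x : ℝ) : p * (x * nSgn p x) = x ^ 2 * nSgn' p x := by
  rw [nSgn, nSgn']
  ring

theorem abs_nAbs' {p : ℝ} (hp : 1 < p) (x : ℝ) : |nAbs' p x| = p * |x| ^ (p - 1) := by
  rcases eq_or_ne x 0 with rfl | hx
  · simp [nAbs', zero_rpow (by linarith : p - 1 ≠ 0)]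
  rw [nAbs', abs_mul, abs_mul, abs_of_pos (by linarith : 0 < p),
    abs_of_nonneg (rpow_nonneg (abs_nonneg x) _), mul_assoc,
    ← rpow_one_add' (abs_nonneg x) (by linarith)]
  ring_nf

theorem abs_nSgn' {p : ℝ} (hp : 0 ≤ p) (x : ℝ) : |nSgn' p x| = p * |x| ^ (p - 1) :=
  abs_of_nonneg (mul_nonneg hp (rpow_nonneg (abs_nonneg x) _))

theorem statement9_general (α p : ℝ) (hα : α ∈ Set.Ioo (0:ℝ) 1) (hp : 1 < p)
    (c : ℝ)
    (hbig : (p / (p - 1)) * (∫ x in (-π)..π, |Kker α x|) ≤ c)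
    (φ : ℝ → ℝ)
    (hφ : (IsSteadySolution α c (nAbs p) φ ∧ ∀ x, nAbs' p (φ x) ≤ c) ∨
          (IsSteadySolution α c (nSgn p) φ ∧ ∀ x, nSgn' p (φ x) ≤ c)) :
    ∀ x : ℝ, φ x = 0 := by
  rcases hφ with ⟨hsol, hadm⟩ | ⟨hsol, hadm⟩
  · exact hsol.eq_zero hα hp hbig (continuous_nAbs (by linarith)) (nAbs_euler p) (abs_nAbs' hp)
      hadm
  · exact hsol.eq_zero hα hp hbig (continuous_nSgn hp.le) (nSgn_euler p)
      (abs_nSgn' (by linarith)) hadm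

/-- Nonexistence of nontrivial admissible solutions for large speeds:
if `c ≥ (p/(p−1)) ∫_{−π}^{π} |K_α|`, every steady solution with `n′(φ) ≤ c`
everywhere (for either nonlinearity) vanishes identically. -/
theorem statement9 (α p : ℝ) (hα : α ∈ Set.Ioo (0:ℝ) 1) (hp : 1 < p)
    (c : ℝ) (hc : 0 < c)
    (hbig : (p / (p - 1)) * (∫ x in (-π)..π, |Kker α x|) ≤ c)
    (φ : ℝ → ℝ)
    (hφ : (IsSteadySolution α c (nAbs p) φ ∧ ∀ x, nAbs' p (φ x) ≤ c) ∨
          (IsSteadySolution α c (nSgn p) φ ∧ ∀ x, nSgn' p (φ x) ≤ c)) :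
    ∀ x : ℝ, φ x = 0 :=
  statement9_general α p hα hp c hbig φ hφ
end

section
/- Let m ≥ 1 be an integer, β ∈ (0, 1], and let I = [a, b] ⊂ ℝ be a compact interval with a < b. Suppose f : ℝ → ℝ is m times continuously differentiable on I, its m-th derivative f^(m) is β-Hölder continuous on I (i.e. sup_{x ≠ y ∈ I} |f^(m)(x) − f^(m)(y)|/|x − y|^β < ∞), f is strictly monotone on I, and f′(x) ≠ 0 for every x ∈ I. Then the inverse function g : f(I) → I (defined by g(f(x)) = x) is m times continuously differentiable on the compact interval f(I) and g^(m) is β-Hölder continuous on f(I). Moreover, in the case m = 1 one has the bound [g′]_β ≤ (sup_{y ∈ f(I)} |g′(y)|)^(2+β) · [f′]_β, where [h]_β denotes the β-Hölder seminorm of h on its domain. -/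
/-!
Call `h` of class `C^{n,β}` on `s` when it is `n` times differentiable within `s` with a continuous,
`β`-Hölder `n`-th derivative. Written recursively (`h` differentiable with `h'` of class
`C^{n-1,β}`), this class is closed under sums, products, inverses of nonvanishing functions and
composition with Lipschitz maps, on compact convex sets and for `0 < β ≤ 1`, each by induction on
`n` from the Leibniz and chain rules. The inverse `g` of `f` satisfies `g' = (1 / f') ∘ g` with
`1 / f'` of class `C^{m-1,β}`, so bootstrapping `g ∈ C^{k,β} ⟹ g' ∈ C^{k,β}` reaches `C^{m,β}`.
For `m = 1`, `g'(u) - g'(v) = g'(u) g'(v) (f'(g v) - f'(g u))` and `|g u - g v| ≤ M |u - v|`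
give the constant `M² · M^β · [f']_β`.
-/

open Real Set Function

def IsHolderOn (β : ℝ) (h : ℝ → ℝ) (s : Set ℝ) : Prop :=
  ∃ L, ∀ x ∈ s, ∀ y ∈ s, |h x - h y| ≤ L * |x - y| ^ β

theorem self_le_max_one_mul_rpow {β r D : ℝ} (hβ : β ∈ Ioc (0 : ℝ) 1) (hr : 0 ≤ r)
    (hrD : r ≤ D) : r ≤ max 1 D * r ^ β := by
  rcases le_total r 1 with hr1 | hr1
  · calc r = r ^ (1 : ℝ) := (rpow_one r).symm
      _ ≤ r ^ β := rpow_le_rpow_of_exponent_ge' hr hr1 hβ.1.le hβ.2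
      _ ≤ max 1 D * r ^ β := le_mul_of_one_le_left (by positivity) (le_max_left _ _)
  · calc r ≤ max 1 D := hrD.trans (le_max_right _ _)
      _ ≤ max 1 D * r ^ β := le_mul_of_one_le_right (by positivity) (one_le_rpow hr1 hβ.1.le)

theorem abs_inv_sub_inv {p q : ℝ} (hp : p ≠ 0) (hq : q ≠ 0) :
    |p⁻¹ - q⁻¹| = |p⁻¹| * |q⁻¹| * |q - p| := by
  rw [inv_sub_inv' hp hq, abs_mul, abs_mul]
  ring

theorem exists_lipschitzOnWith_of_continuousOn_derivWithin {s : Set ℝ} {h : ℝ → ℝ}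
    (hs : IsCompact s) (hcv : Convex ℝ s) (hd : DifferentiableOn ℝ h s)
    (hc : ContinuousOn (derivWithin h s) s) : ∃ K, LipschitzOnWith K h s := by
  obtain ⟨C, hC⟩ := hs.exists_bound_of_continuousOn hc
  refine ⟨C.toNNReal, hcv.lipschitzOnWith_of_nnnorm_derivWithin_le hd fun x hx => ?_⟩
  rw [← NNReal.coe_le_coe, Real.coe_toNNReal', coe_nnnorm]
  exact (hC x hx).trans (le_max_left _ _)

namespace IsHolderOn

variable {β : ℝ} {s t : Set ℝ} {g h u v : ℝ → ℝ}

theorem exists_nonneg (hh : IsHolderOn β h s) :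
    ∃ L, 0 ≤ L ∧ ∀ x ∈ s, ∀ y ∈ s, |h x - h y| ≤ L * |x - y| ^ β := by
  obtain ⟨L, hL⟩ := hh
  exact ⟨max L 0, le_max_right _ _, fun x hx y hy => (hL x hx y hy).trans <|
    mul_le_mul_of_nonneg_right (le_max_left _ _) (rpow_nonneg (abs_nonneg _) _)⟩

theorem congr (hh : IsHolderOn β h s) (heq : EqOn u h s) : IsHolderOn β u s := by
  obtain ⟨L, hL⟩ := hh
  exact ⟨L, fun x hx y hy => by simpa only [heq hx, heq hy] using hL x hx y hy⟩

theorem add (hu : IsHolderOn β u s) (hv : IsHolderOn β v s) : IsHolderOn β (u + v) s := by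
  obtain ⟨Lu, hLu⟩ := hu
  obtain ⟨Lv, hLv⟩ := hv
  refine ⟨Lu + Lv, fun x hx y hy => ?_⟩
  calc |(u + v) x - (u + v) y| = |(u x - u y) + (v x - v y)| := by
        simp only [Pi.add_apply]; ring_nf
    _ ≤ |u x - u y| + |v x - v y| := abs_add_le (u x - u y) (v x - v y)
    _ ≤ Lu * |x - y| ^ β + Lv * |x - y| ^ β := add_le_add (hLu x hx y hy) (hLv x hx y hy)
    _ = (Lu + Lv) * |x - y| ^ β := by ring

theorem neg (hu : IsHolderOn β u s) : IsHolderOn β (-u) s := by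
  obtain ⟨L, hL⟩ := hu
  exact ⟨L, fun x hx y hy => by
    simpa only [Pi.neg_apply, neg_sub_neg, abs_sub_comm] using hL x hx y hy⟩

theorem mul (hs : IsCompact s) (huc : ContinuousOn u s) (hvc : ContinuousOn v s)
    (hu : IsHolderOn β u s) (hv : IsHolderOn β v s) : IsHolderOn β (u * v) s := by
  obtain ⟨A, hA⟩ := hs.exists_bound_of_continuousOn huc
  obtain ⟨B, hB⟩ := hs.exists_bound_of_continuousOn hvc
  obtain ⟨Lu, hLu0, hLu⟩ := hu.exists_nonneg
  obtain ⟨Lv, hLv0, hLv⟩ := hv.exists_nonneg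
  refine ⟨A * Lv + B * Lu, fun x hx y hy => ?_⟩
  have hA0 : 0 ≤ A := (norm_nonneg _).trans (hA x hx)
  have hB0 : 0 ≤ B := (norm_nonneg _).trans (hB y hy)
  calc |(u * v) x - (u * v) y| = |u x * (v x - v y) + v y * (u x - u y)| := by
        simp only [Pi.mul_apply]; ring_nf
    _ ≤ |u x| * |v x - v y| + |v y| * |u x - u y| := by
        simpa only [abs_mul] using abs_add_le (u x * (v x - v y)) (v y * (u x - u y))
    _ ≤ A * (Lv * |x - y| ^ β) + B * (Lu * |x - y| ^ β) := by
        gcongr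
        exacts [hA x hx, hLv x hx y hy, hB y hy, hLu x hx y hy]
    _ = (A * Lv + B * Lu) * |x - y| ^ β := by ring

theorem inv (hs : IsCompact s) (huc : ContinuousOn u s) (hu0 : ∀ x ∈ s, u x ≠ 0)
    (hu : IsHolderOn β u s) : IsHolderOn β u⁻¹ s := by
  obtain ⟨C, hC⟩ := hs.exists_bound_of_continuousOn (huc.inv₀ hu0)
  obtain ⟨L, hL0, hL⟩ := hu.exists_nonneg
  refine ⟨C * C * L, fun x hx y hy => ?_⟩
  have hC0 : 0 ≤ C := (norm_nonneg _).trans (hC x hx)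
  calc |u⁻¹ x - u⁻¹ y| = |(u x)⁻¹| * |(u y)⁻¹| * |u y - u x| :=
        abs_inv_sub_inv (hu0 x hx) (hu0 y hy)
    _ ≤ C * C * (L * |x - y| ^ β) := by
        gcongr
        exacts [hC x hx, hC y hy, abs_sub_comm (u y) (u x) ▸ hL x hx y hy]
    _ = C * C * L * |x - y| ^ β := by ring

theorem comp {K : NNReal} (hh : IsHolderOn β h t) (hβ : 0 ≤ β) (hg : LipschitzOnWith K g s)
    (hmaps : MapsTo g s t) : IsHolderOn β (h ∘ g) s := by
  obtain ⟨L, hL0, hL⟩ := hh.exists_nonneg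
  refine ⟨L * (K : ℝ) ^ β, fun x hx y hy => ?_⟩
  have hgxy : |g x - g y| ≤ K * |x - y| := hg.dist_le_mul x hx y hy
  calc |(h ∘ g) x - (h ∘ g) y| ≤ L * |g x - g y| ^ β := hL _ (hmaps hx) _ (hmaps hy)
    _ ≤ L * (K * |x - y|) ^ β := by gcongr
    _ = L * (K : ℝ) ^ β * |x - y| ^ β := by
        rw [mul_rpow K.coe_nonneg (abs_nonneg _), mul_assoc]

theorem of_lipschitzOnWith {K : NNReal} (hβ : β ∈ Ioc (0 : ℝ) 1) (hs : Bornology.IsBounded s)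
    (hh : LipschitzOnWith K h s) : IsHolderOn β h s := by
  refine ⟨K * max 1 (Metric.diam s), fun x hx y hy => ?_⟩
  calc |h x - h y| ≤ K * |x - y| := hh.dist_le_mul x hx y hy
    _ ≤ K * (max 1 (Metric.diam s) * |x - y| ^ β) := by
        gcongr
        exact self_le_max_one_mul_rpow hβ (abs_nonneg _) (Metric.dist_le_diam_of_mem hs hx hy)
    _ = K * max 1 (Metric.diam s) * |x - y| ^ β := by ring

end IsHolderOn

def ContDiffHolderOn (β : ℝ) : ℕ → (ℝ → ℝ) → Set ℝ → Prop
  | 0, h, s => ContinuousOn h s ∧ IsHolderOn β h s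
  | n + 1, h, s => DifferentiableOn ℝ h s ∧ ContDiffHolderOn β n (derivWithin h s) s

theorem contDiffHolderOn_iff {β : ℝ} {n : ℕ} {h : ℝ → ℝ} {s : Set ℝ} (hs : UniqueDiffOn ℝ s) :
    ContDiffHolderOn β n h s ↔
      ContDiffOn ℝ n h s ∧ IsHolderOn β (iteratedDerivWithin n h s) s := by
  induction n generalizing h with
  | zero =>
    simp only [ContDiffHolderOn, CharP.cast_eq_zero, contDiffOn_zero, iteratedDerivWithin_zero]
  | succ n ih =>
    rw [ContDiffHolderOn, ih, iteratedDerivWithin_succ', Nat.cast_succ,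
      contDiffOn_succ_iff_derivWithin hs]
    simp [and_assoc]

namespace ContDiffHolderOn

variable {β : ℝ} {n : ℕ} {s t : Set ℝ} {g h u v : ℝ → ℝ}

theorem continuousOn (hh : ContDiffHolderOn β n h s) : ContinuousOn h s := by
  cases n with
  | zero => exact hh.1
  | succ n => exact hh.1.continuousOn

theorem congr (hh : ContDiffHolderOn β n h s) (heq : EqOn u h s) : ContDiffHolderOn β n u s := by
  induction n generalizing h u with
  | zero => exact ⟨hh.1.congr heq, hh.2.congr heq⟩
  | succ n ih =>
    exact ⟨hh.1.congr heq, ih hh.2 fun x hx => derivWithin_congr heq (heq hx)⟩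

theorem exists_lipschitzOnWith (hs : IsCompact s) (hcv : Convex ℝ s)
    (hh : ContDiffHolderOn β (n + 1) h s) : ∃ K, LipschitzOnWith K h s :=
  exists_lipschitzOnWith_of_continuousOn_derivWithin hs hcv hh.1 hh.2.continuousOn

theorem of_succ (hβ : β ∈ Ioc (0 : ℝ) 1) (hs : IsCompact s) (hcv : Convex ℝ s)
    (hh : ContDiffHolderOn β (n + 1) h s) : ContDiffHolderOn β n h s := by
  induction n generalizing h with
  | zero =>
    obtain ⟨K, hK⟩ := hh.exists_lipschitzOnWith hs hcv
    exact ⟨hh.1.continuousOn, .of_lipschitzOnWith hβ hs.isBounded hK⟩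
  | succ n ih => exact ⟨hh.1, ih hh.2⟩

theorem of_le {k : ℕ} (hβ : β ∈ Ioc (0 : ℝ) 1) (hs : IsCompact s) (hcv : Convex ℝ s)
    (hkn : k ≤ n) (hh : ContDiffHolderOn β n h s) : ContDiffHolderOn β k h s := by
  induction hkn with
  | refl => exact hh
  | step _ ih => exact ih (hh.of_succ hβ hs hcv)

theorem add (hu : ContDiffHolderOn β n u s) (hv : ContDiffHolderOn β n v s) :
    ContDiffHolderOn β n (u + v) s := by
  induction n generalizing u v with
  | zero => exact ⟨hu.1.add hv.1, hu.2.add hv.2⟩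
  | succ n ih =>
    exact ⟨hu.1.add hv.1,
      (ih hu.2 hv.2).congr fun x hx => derivWithin_add (hu.1 x hx) (hv.1 x hx)⟩

theorem neg (hu : ContDiffHolderOn β n u s) : ContDiffHolderOn β n (-u) s := by
  induction n generalizing u with
  | zero => exact ⟨hu.1.neg, hu.2.neg⟩
  | succ n ih => exact ⟨hu.1.neg, (ih hu.2).congr fun x _ => derivWithin.neg⟩

theorem mul (hβ : β ∈ Ioc (0 : ℝ) 1) (hs : IsCompact s) (hcv : Convex ℝ s)
    (hu : ContDiffHolderOn β n u s) (hv : ContDiffHolderOn β n v s) :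
    ContDiffHolderOn β n (u * v) s := by
  induction n generalizing u v with
  | zero => exact ⟨hu.1.mul hv.1, hu.2.mul hs hu.1 hv.1 hv.2⟩
  | succ n ih =>
    refine ⟨hu.1.mul hv.1, ?_⟩
    exact ((ih hu.2 (hv.of_succ hβ hs hcv)).add (ih (hu.of_succ hβ hs hcv) hv.2)).congr
      fun x hx => derivWithin_mul (hu.1 x hx) (hv.1 x hx)

theorem inv (hβ : β ∈ Ioc (0 : ℝ) 1) (hs : IsCompact s) (hcv : Convex ℝ s)
    (hu : ContDiffHolderOn β n u s) (hu0 : ∀ x ∈ s, u x ≠ 0) :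
    ContDiffHolderOn β n u⁻¹ s := by
  induction n generalizing u with
  | zero => exact ⟨hu.1.inv₀ hu0, hu.2.inv hs hu.1 hu0⟩
  | succ n ih =>
    have hinv := ih (hu.of_succ hβ hs hcv) hu0
    refine ⟨hu.1.inv hu0,
      (hu.2.mul hβ hs hcv (hinv.mul hβ hs hcv hinv)).neg.congr fun x hx => ?_⟩
    rw [derivWithin_inv' (hu.1 x hx) (hu0 x hx)]
    simp only [Pi.neg_apply, Pi.mul_apply, Pi.inv_apply]
    ring

theorem comp {K : NNReal} (hβ : β ∈ Ioc (0 : ℝ) 1) (hs : IsCompact s) (hcv : Convex ℝ s)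
    (hh : ContDiffHolderOn β n h t) (hg : ContDiffHolderOn β n g s)
    (hK : LipschitzOnWith K g s) (hmaps : MapsTo g s t) :
    ContDiffHolderOn β n (h ∘ g) s := by
  induction n generalizing h g with
  | zero => exact ⟨hh.1.comp hg.1 hmaps, hh.2.comp hβ.1.le hK hmaps⟩
  | succ n ih =>
    refine ⟨hh.1.comp hg.1 hmaps, ?_⟩
    exact ((ih hh.2 (hg.of_succ hβ hs hcv) hK hmaps).mul hβ hs hcv hg.2).congr
      fun x hx => derivWithin_comp x (hh.1 _ (hmaps hx)) (hg.1 x hx) hmaps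

end ContDiffHolderOn

theorem IsCompact.continuousOn_invFunOn {X Y : Type*} [TopologicalSpace X] [Nonempty X]
    [TopologicalSpace Y] [T2Space Y] {f : X → Y} {K : Set X} (hK : IsCompact K)
    (hf : ContinuousOn f K) (hinj : InjOn f K) : ContinuousOn (invFunOn f K) (f '' K) := by
  refine continuousOn_iff_isClosed.2 fun C hC => ⟨f '' (C ∩ K),
    ((hK.inter_left hC).image_of_continuousOn (hf.mono inter_subset_right)).isClosed, ?_⟩
  ext y
  constructor
  · rintro ⟨hyC, x, hx, rfl⟩
    rw [mem_preimage, hinj.leftInvOn_invFunOn hx] at hyC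
    exact ⟨⟨x, ⟨hyC, hx⟩, rfl⟩, x, hx, rfl⟩
  · rintro ⟨⟨x, ⟨hxC, hx⟩, rfl⟩, hy⟩
    exact ⟨by rwa [mem_preimage, hinj.leftInvOn_invFunOn hx], hy⟩

theorem hasDerivWithinAt_invFunOn {f : ℝ → ℝ} {f' : ℝ} {K : Set ℝ} {y : ℝ} (hK : IsCompact K)
    (hf : ContinuousOn f K) (hinj : InjOn f K) (hy : y ∈ f '' K)
    (hfd : HasDerivWithinAt f f' K (invFunOn f K y)) (hf' : f' ≠ 0) :
    HasDerivWithinAt (invFunOn f K) f'⁻¹ (f '' K) y := by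
  have hmaps : MapsTo (invFunOn f K) (f '' K) K := (surjOn_image f K).mapsTo_invFunOn
  -- `HasDerivWithinAt f f'` unfolds to a Fréchet derivative `x ↦ x * f'`, invertible as `f' ≠ 0`
  have hfd' : HasFDerivWithinAt f
      (ContinuousLinearEquiv.unitsEquivAut ℝ (Units.mk0 f' hf') : ℝ →L[ℝ] ℝ) K
      (invFunOn f K y) := hfd
  exact hfd'.of_local_left_inverse
    ((hK.continuousOn_invFunOn hf hinj y hy).tendsto_nhdsWithin hmaps) hy
    (eventually_mem_nhdsWithin.mono fun z hz => (surjOn_image f K).rightInvOn_invFunOn hz)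

theorem exists_lt_and_image_Icc_eq {f : ℝ → ℝ} {a b : ℝ} (hab : a < b)
    (hf : ContinuousOn f (Icc a b)) (hinj : InjOn f (Icc a b)) :
    ∃ c d, c < d ∧ f '' Icc a b = Icc c d := by
  have hJ := hf.image_Icc hab.le
  refine ⟨_, _, ?_, hJ⟩
  have ha : f a ∈ f '' Icc a b := mem_image_of_mem f (left_mem_Icc.2 hab.le)
  have hb : f b ∈ f '' Icc a b := mem_image_of_mem f (right_mem_Icc.2 hab.le)
  rw [hJ] at ha hb
  by_contra! hdc
  refine hab.ne (hinj (left_mem_Icc.2 hab.le) (right_mem_Icc.2 hab.le) ?_)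
  linarith [ha.1, ha.2, hb.1, hb.2]

theorem contDiffHolderOn_succ_of_derivWithin_eq_comp {β : ℝ} {n : ℕ} {s t : Set ℝ}
    {g φ : ℝ → ℝ} (hβ : β ∈ Ioc (0 : ℝ) 1) (hs : IsCompact s) (hcv : Convex ℝ s)
    (ht : IsCompact t) (htcv : Convex ℝ t) (hg : DifferentiableOn ℝ g s)
    (hmaps : MapsTo g s t) (hφ : ContDiffHolderOn β n φ t)
    (hg' : EqOn (derivWithin g s) (φ ∘ g) s) : ContDiffHolderOn β (n + 1) g s := by
  obtain ⟨K, hK⟩ := exists_lipschitzOnWith_of_continuousOn_derivWithin hs hcv hg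
    ((hφ.continuousOn.comp hg.continuousOn hmaps).congr hg')
  suffices ∀ k ≤ n + 1, ContDiffHolderOn β k g s from this _ le_rfl
  intro k hk
  induction k with
  | zero => exact ⟨hg.continuousOn, .of_lipschitzOnWith hβ hs.isBounded hK⟩
  | succ k ih =>
    have hφk := hφ.of_le hβ ht htcv (by omega : k ≤ n)
    exact ⟨hg, (hφk.comp hβ hs hcv (ih (by omega)) hK hmaps).congr hg'⟩

theorem abs_derivWithin_sub_le_of_derivWithin_eq_inv_comp {β M L : ℝ} {s t : Set ℝ}
    {g F : ℝ → ℝ} (hβ : 0 ≤ β) (hcv : Convex ℝ s) (hg : DifferentiableOn ℝ g s)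
    (hmaps : MapsTo g s t) (hF0 : ∀ x ∈ t, F x ≠ 0)
    (hg' : ∀ y ∈ s, derivWithin g s y = (F (g y))⁻¹)
    (hM : ∀ y ∈ s, |derivWithin g s y| ≤ M) (hL0 : 0 ≤ L)
    (hL : ∀ x ∈ t, ∀ y ∈ t, |F x - F y| ≤ L * |x - y| ^ β) {u v : ℝ} (hu : u ∈ s) (hv : v ∈ s) :
    |derivWithin g s u - derivWithin g s v| ≤ M ^ (2 + β) * L * |u - v| ^ β := by
  have hM0 : 0 ≤ M := (abs_nonneg _).trans (hM u hu)
  have hlip : |g v - g u| ≤ M * |v - u| := by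
    simpa only [Real.norm_eq_abs] using hcv.norm_image_sub_le_of_norm_derivWithin_le hg
      (by simpa only [Real.norm_eq_abs] using hM) hu hv
  calc |derivWithin g s u - derivWithin g s v|
      = |(F (g u))⁻¹| * |(F (g v))⁻¹| * |F (g v) - F (g u)| := by
        rw [hg' u hu, hg' v hv, abs_inv_sub_inv (hF0 _ (hmaps hu)) (hF0 _ (hmaps hv))]
    _ ≤ M * M * (L * (M * |v - u|) ^ β) := by
        gcongr
        · exact hg' u hu ▸ hM u hu
        · exact hg' v hv ▸ hM v hv
        · exact (hL _ (hmaps hv) _ (hmaps hu)).trans (by gcongr)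
    _ = M ^ (2 + β) * L * |u - v| ^ β := by
        rw [rpow_add' hM0 (by positivity), mul_rpow hM0 (abs_nonneg _), abs_sub_comm v u,
          rpow_two]
        ring

/-- Inverse function theorem on the Hölder scale `C^{m,β}`:
if `f` is `C^{m,β}` and strictly monotone on a compact interval `I = [a,b]`
with nonvanishing derivative, then its inverse `g` is `C^{m,β}` on `f(I)`;
for `m = 1` one has the seminorm bound
`[g′]_β ≤ (sup_{f(I)} |g′|)^{2+β} · [f′]_β`. -/
theorem statement10 (m : ℕ) (hm : 1 ≤ m) (β : ℝ) (hβ : β ∈ Set.Ioc (0:ℝ) 1)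
    (a b : ℝ) (hab : a < b) (f : ℝ → ℝ)
    (hreg : ContDiffOn ℝ m f (Set.Icc a b))
    (hHolder : ∃ L : ℝ, ∀ x ∈ Set.Icc a b, ∀ y ∈ Set.Icc a b,
      |iteratedDerivWithin m f (Set.Icc a b) x - iteratedDerivWithin m f (Set.Icc a b) y|
        ≤ L * |x - y| ^ β)
    (hmono : StrictMonoOn f (Set.Icc a b) ∨ StrictAntiOn f (Set.Icc a b))
    (hderiv : ∀ x ∈ Set.Icc a b, derivWithin f (Set.Icc a b) x ≠ 0) :
    ∃ g : ℝ → ℝ,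
      (∀ x ∈ Set.Icc a b, g (f x) = x) ∧
      ContDiffOn ℝ m g (f '' Set.Icc a b) ∧
      (∃ L : ℝ, ∀ u ∈ f '' Set.Icc a b, ∀ v ∈ f '' Set.Icc a b,
        |iteratedDerivWithin m g (f '' Set.Icc a b) u
          - iteratedDerivWithin m g (f '' Set.Icc a b) v| ≤ L * |u - v| ^ β) ∧
      (m = 1 → ∀ M Lf : ℝ,
        (∀ y ∈ f '' Set.Icc a b, |derivWithin g (f '' Set.Icc a b) y| ≤ M) →
        (∀ x ∈ Set.Icc a b, ∀ y ∈ Set.Icc a b,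
          |derivWithin f (Set.Icc a b) x - derivWithin f (Set.Icc a b) y|
            ≤ Lf * |x - y| ^ β) →
        ∀ u ∈ f '' Set.Icc a b, ∀ v ∈ f '' Set.Icc a b,
          |derivWithin g (f '' Set.Icc a b) u - derivWithin g (f '' Set.Icc a b) v|
            ≤ M ^ (2 + β) * Lf * |u - v| ^ β) := by
  obtain ⟨k, rfl⟩ : ∃ k, m = k + 1 := ⟨m - 1, by omega⟩
  have hinj : InjOn f (Icc a b) := hmono.elim StrictMonoOn.injOn StrictAntiOn.injOn
  have hf : ContDiffHolderOn β (k + 1) f (Icc a b) :=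
    (contDiffHolderOn_iff (uniqueDiffOn_Icc hab)).2 ⟨hreg, hHolder⟩
  obtain ⟨c, d, hcd, hJ⟩ := exists_lt_and_image_Icc_eq hab hf.continuousOn hinj
  set g := invFunOn f (Icc a b)
  have hmaps : MapsTo g (f '' Icc a b) (Icc a b) := (surjOn_image f _).mapsTo_invFunOn
  have hg : ∀ y ∈ f '' Icc a b,
      HasDerivWithinAt g (derivWithin f (Icc a b) (g y))⁻¹ (f '' Icc a b) y := fun y hy =>
    hasDerivWithinAt_invFunOn isCompact_Icc hf.continuousOn hinj hy
      (hf.1 _ (hmaps hy)).hasDerivWithinAt (hderiv _ (hmaps hy))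
  have hgd : DifferentiableOn ℝ g (f '' Icc a b) := fun y hy => (hg y hy).differentiableWithinAt
  have hg' : ∀ y ∈ f '' Icc a b,
      derivWithin g (f '' Icc a b) y = (derivWithin f (Icc a b) (g y))⁻¹ := fun y hy =>
    (hg y hy).derivWithin ((hJ ▸ uniqueDiffOn_Icc hcd) y hy)
  have hgC : ContDiffHolderOn β (k + 1) g (f '' Icc a b) :=
    contDiffHolderOn_succ_of_derivWithin_eq_comp hβ (hJ ▸ isCompact_Icc) (hJ ▸ convex_Icc c d)
      isCompact_Icc (convex_Icc a b) hgd hmaps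
      (hf.2.inv hβ isCompact_Icc (convex_Icc a b) hderiv) hg'
  obtain ⟨hgreg, hgHolder⟩ := (contDiffHolderOn_iff (hJ ▸ uniqueDiffOn_Icc hcd)).1 hgC
  refine ⟨g, fun x hx => hinj.leftInvOn_invFunOn hx, hgreg, hgHolder, ?_⟩
  intro _ M Lf hM hLf u hu v hv
  have hLf0 : 0 ≤ Lf := nonneg_of_mul_nonneg_left
    ((abs_nonneg _).trans (hLf a (left_mem_Icc.2 hab.le) b (right_mem_Icc.2 hab.le)))
    (rpow_pos_of_pos (abs_pos.2 (sub_ne_zero.2 hab.ne)) β)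
  exact abs_derivWithin_sub_le_of_derivWithin_eq_inv_comp hβ.1.le (hJ ▸ convex_Icc c d) hgd
    hmaps hderiv hg' hM hLf0 hLf hu hv
end

section
/- Let α ∈ (0, 1). (i) There exist constants C > 0 and S > 1 such that for every real s ≥ S, |(s+1)^(α−1) − 2·s^(α−1) + (s−1)^(α−1) − (α−1)·(α−2)·s^(α−3)| ≤ C·s^(α−5). (ii) For every β ∈ [0, α], the function s ↦ | |s+1|^(α−1) − 2·|s|^(α−1) + |s−1|^(α−1) | · |s|^β is Lebesgue integrable on ℝ (it is integrable near the singular points s = 0, 1, −1 and at infinity). -/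
/-!
Put `f x = x ^ r` with `r = α - 1` and, for `s ≥ 2`, `g t = f (s + t) + f (s - t)` on `[0, 1]`.
Since `g` is even, its odd derivatives vanish at `0`, so Taylor's formula for `g` gives
`g 1 - g 0 = f'' s + E` with `|E| ≤ sup |f⁗| / 12 = O(s ^ (α - 5))` over `[s - 1, s + 1]`; the
order-two version gives `|f (s + 1) - 2 f s + f (s - 1)| = O(s ^ (α - 3))`.

For (ii), `|x| ^ (α - 1)` is locally integrable because `α - 1 > -1`, so the integrand is locally
integrable; it is even in `s` and `O(s ^ (α + β - 3))` at `+∞`, where `α + β - 3 < -1`.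
-/

open Real Set MeasureTheory
open scoped Nat

theorem hasDerivAt_mul_pow_succ_div_factorial (c : ℝ) (k : ℕ) (t : ℝ) :
    HasDerivAt (fun t => c * t ^ (k + 1) / (k + 1)!) (c * t ^ k / k !) t := by
  refine (((hasDerivAt_pow (k + 1) t).const_mul c).div_const ((k + 1)! : ℝ)).congr_deriv ?_
  rw [Nat.factorial_succ]
  push_cast
  field_simp

theorem hasDerivAt_taylor_sum (c : ℕ → ℝ) (n : ℕ) (t : ℝ) :
    HasDerivAt (fun t => ∑ k ∈ Finset.range (n + 1), c k * t ^ k / k !)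
      (∑ k ∈ Finset.range n, c (k + 1) * t ^ k / k !) t := by
  induction n with
  | zero => simpa using hasDerivAt_const t (c 0)
  | succ n ih =>
    rw [Finset.sum_range_succ]
    exact (ih.add (hasDerivAt_mul_pow_succ_div_factorial (c (n + 1)) n t)).congr_of_eventuallyEq
      (.of_forall fun s => Finset.sum_range_succ _ _)

theorem abs_sub_taylor_le {f : ℕ → ℝ → ℝ} {a M : ℝ} (n : ℕ)
    (hf : ∀ k < n, ∀ t ∈ Icc 0 a, HasDerivAt (f k) (f (k + 1) t) t)
    (hM : ∀ t ∈ Icc 0 a, |f n t| ≤ M) :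
    ∀ t ∈ Icc 0 a,
      |f 0 t - ∑ k ∈ Finset.range n, f k 0 * t ^ k / k !| ≤ M * t ^ n / n ! := by
  induction n generalizing f with
  | zero => simpa using hM
  | succ n ih =>
    have hderiv : ∀ t ∈ Icc 0 a,
        HasDerivAt (fun t => f 0 t - ∑ k ∈ Finset.range (n + 1), f k 0 * t ^ k / k !)
          (f 1 t - ∑ k ∈ Finset.range n, f (k + 1) 0 * t ^ k / k !) t := fun t ht =>
      (hf 0 n.succ_pos t ht).sub (hasDerivAt_taylor_sum (f · 0) n t)
    have hbound := ih (f := fun k => f (k + 1)) (fun k hk => hf (k + 1) (by omega)) hM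
    refine image_norm_le_of_norm_deriv_right_le_deriv_boundary
      (fun t ht => (hderiv t ht).continuousAt.continuousWithinAt)
      (fun t ht => (hderiv t (Ico_subset_Icc_self ht)).hasDerivWithinAt) ?_
      (hasDerivAt_mul_pow_succ_div_factorial M n)
      (fun t ht => hbound t (Ico_subset_Icc_self ht))
    simp [Finset.sum_range_succ']

theorem abs_add_sub_even_taylor_le {f : ℕ → ℝ → ℝ} {s M : ℝ} (n : ℕ)
    (hf : ∀ k < n, ∀ x ∈ Icc (s - 1) (s + 1), HasDerivAt (f k) (f (k + 1) x) x)
    (hM : ∀ x ∈ Icc (s - 1) (s + 1), |f n x| ≤ M) :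
    |f 0 (s + 1) + f 0 (s - 1) - ∑ k ∈ Finset.range n, (1 + (-1) ^ k) * f k s / k !|
      ≤ 2 * M / n ! := by
  set g : ℕ → ℝ → ℝ := fun k t => f k (s + t) + (-1) ^ k * f k (s - t)
  have hmem : ∀ t ∈ Icc (0 : ℝ) 1,
      s + t ∈ Icc (s - 1) (s + 1) ∧ s - t ∈ Icc (s - 1) (s + 1) :=
    fun t ⟨h₀, h₁⟩ => ⟨⟨by linarith, by linarith⟩, ⟨by linarith, by linarith⟩⟩
  have hg : ∀ k < n, ∀ t ∈ Icc 0 1, HasDerivAt (g k) (g (k + 1) t) t := by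
    intro k hk t ht
    have hplus := (hf k hk _ (hmem t ht).1).comp_const_add s t
    have hminus := ((hf k hk _ (hmem t ht).2).comp_const_sub s t).const_mul ((-1) ^ k)
    exact (hplus.add hminus).congr_deriv (by ring)
  have hgM : ∀ t ∈ Icc 0 1, |g n t| ≤ 2 * M := by
    intro t ht
    calc |g n t| ≤ |f n (s + t)| + |f n (s - t)| := by
          simpa [g, abs_mul] using abs_add_le (f n (s + t)) ((-1) ^ n * f n (s - t))
      _ ≤ 2 * M := by linarith [hM _ (hmem t ht).1, hM _ (hmem t ht).2]
  have key := abs_sub_taylor_le n hg hgM 1 ⟨zero_le_one, le_rfl⟩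
  rw [one_pow, mul_one] at key
  convert key using 3
  · simp [g]
  · refine Finset.sum_congr rfl fun k _ => ?_
    simp only [add_zero, sub_zero, one_pow, mul_one, g]
    ring

theorem hasDerivAt_descPochhammer_eval_mul_rpow (r : ℝ) (k : ℕ) {x : ℝ} (hx : x ≠ 0) :
    HasDerivAt (fun y => (descPochhammer ℝ k).eval r * y ^ (r - k))
      ((descPochhammer ℝ (k + 1)).eval r * x ^ (r - (k + 1 : ℕ))) x := by
  refine ((hasDerivAt_rpow_const (Or.inl hx)).const_mul _).congr_deriv ?_
  rw [descPochhammer_succ_right, Polynomial.eval_mul, Polynomial.eval_sub, Polynomial.eval_X,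
    Polynomial.eval_natCast]
  push_cast
  ring_nf

theorem rpow_le_two_rpow_mul_of_half_le {q s x : ℝ} (hq : q ≤ 0) (hs : 0 < s)
    (hx : s / 2 ≤ x) :
    x ^ q ≤ 2 ^ (-q) * s ^ q := by
  calc x ^ q ≤ (s / 2) ^ q := Real.rpow_le_rpow_of_nonpos (by positivity) hx hq
    _ = 2 ^ (-q) * s ^ q := by
      rw [Real.div_rpow hs.le zero_le_two, Real.rpow_neg zero_le_two, div_eq_inv_mul]

theorem abs_rpow_add_rpow_sub_taylor_le {r s : ℝ} (n : ℕ) (hrn : r ≤ n) (hs : 2 ≤ s) :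
    |(s + 1) ^ r + (s - 1) ^ r
        - ∑ k ∈ Finset.range n,
            (1 + (-1) ^ k) * ((descPochhammer ℝ k).eval r * s ^ (r - k)) / k !|
      ≤ 2 * (|(descPochhammer ℝ n).eval r| * (2 ^ (n - r) * s ^ (r - n))) / n ! := by
  have hhalf : ∀ x ∈ Icc (s - 1) (s + 1), s / 2 ≤ x := fun x hx => by linarith [hx.1]
  have hbound : ∀ x ∈ Icc (s - 1) (s + 1), |(descPochhammer ℝ n).eval r * x ^ (r - n)|
      ≤ |(descPochhammer ℝ n).eval r| * (2 ^ (n - r) * s ^ (r - n)) := by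
    intro x hx
    have hx := hhalf x hx
    rw [abs_mul, abs_of_nonneg (Real.rpow_nonneg (by linarith) _), ← neg_sub r]
    gcongr
    exact rpow_le_two_rpow_mul_of_half_le (by linarith) (by linarith) hx
  have key := abs_add_sub_even_taylor_le
    (f := fun k y => (descPochhammer ℝ k).eval r * y ^ (r - k)) n
    (fun k _ x hx => hasDerivAt_descPochhammer_eval_mul_rpow r k
      (by linarith [hhalf x hx] : 0 < x).ne')
    hbound
  simpa using key

theorem abs_rpow_second_difference_le {r s : ℝ} (hr : r ≤ 2) (hs : 2 ≤ s) :
    |(s + 1) ^ r - 2 * s ^ r + (s - 1) ^ r| ≤ |r * (r - 1)| * 2 ^ (2 - r) * s ^ (r - 2) := by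
  have h := abs_rpow_add_rpow_sub_taylor_le 2 (by exact_mod_cast hr) hs
  norm_num [Finset.sum_range_succ, descPochhammer_succ_right, Nat.factorial, abs_mul] at h ⊢
  convert h using 1
  · congr 1; ring
  · ring

theorem abs_rpow_second_difference_sub_le {r s : ℝ} (hr : r ≤ 4) (hs : 2 ≤ s) :
    |(s + 1) ^ r - 2 * s ^ r + (s - 1) ^ r - r * (r - 1) * s ^ (r - 2)|
      ≤ |r * (r - 1) * (r - 2) * (r - 3)| * 2 ^ (4 - r) * s ^ (r - 4) / 12 := by
  have h := abs_rpow_add_rpow_sub_taylor_le 4 (by exact_mod_cast hr) hs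
  norm_num [Finset.sum_range_succ, descPochhammer_succ_right, Nat.factorial, abs_mul] at h ⊢
  convert h using 1
  · congr 1; ring
  · ring

theorem MeasureTheory.LocallyIntegrable.comp_add_right {G E : Type*} [AddGroup G]
    [TopologicalSpace G] [IsTopologicalAddGroup G] [MeasurableSpace G] [BorelSpace G]
    {μ : Measure G} [μ.IsAddRightInvariant] [NormedAddCommGroup E] {f : G → E}
    (hf : LocallyIntegrable f μ) (c : G) : LocallyIntegrable (fun x => f (x + c)) μ := by
  rw [← map_add_right_eq_self μ c] at hf
  exact (locallyIntegrable_map_homeomorph (Homeomorph.addRight c)).1 hf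

theorem locallyIntegrable_abs_rpow {p : ℝ} (hp : -1 < p) :
    LocallyIntegrable (fun x : ℝ => |x| ^ p) := by
  refine locallyIntegrable_of_norm_le_rpow (C := 1) (α := -p) (by simp) (by simp; linarith)
    (.of_forall fun x => ?_) (continuous_abs.measurable.pow_const p).aestronglyMeasurable
  simp [abs_of_nonneg (Real.rpow_nonneg (abs_nonneg x) p)]

theorem locallyIntegrable_abs_rpow_second_difference {r : ℝ} (hr : -1 < r) :
    LocallyIntegrable (fun s : ℝ => |s + 1| ^ r - 2 * |s| ^ r + |s - 1| ^ r) := by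
  have h := locallyIntegrable_abs_rpow hr
  refine (((h.comp_add_right 1).sub (h.smul (2 : ℝ))).add (h.comp_add_right (-1))).congr
    (.of_forall fun s => ?_)
  simp [sub_eq_add_neg]

theorem isBigO_abs_rpow_second_difference_mul_abs_rpow {r : ℝ} (hr : r ≤ 2) (β : ℝ) :
    (fun s : ℝ => |(|s + 1| ^ r - 2 * |s| ^ r + |s - 1| ^ r)| * |s| ^ β)
      =O[Filter.atTop] fun s => s ^ (r + β - 2) := by
  refine Asymptotics.IsBigO.of_bound (|r * (r - 1)| * 2 ^ (2 - r)) ?_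
  filter_upwards [Filter.eventually_ge_atTop 2] with s hs
  have hs0 : 0 < s := by linarith
  rw [abs_of_pos (by linarith : 0 < s + 1), abs_of_pos hs0, abs_of_pos (by linarith : 0 < s - 1),
    Real.norm_eq_abs, Real.norm_eq_abs, abs_mul, abs_abs, abs_of_pos (Real.rpow_pos_of_pos hs0 _),
    abs_of_pos (Real.rpow_pos_of_pos hs0 _), add_sub_right_comm, Real.rpow_add hs0, ← mul_assoc]
  exact mul_le_mul_of_nonneg_right (abs_rpow_second_difference_le hr hs)
    (Real.rpow_nonneg hs0.le _)

/-- (i) Asymptotics of the second-order central difference of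
`s ↦ s^{α−1}`: for large `s`,
`|(s+1)^{α−1} − 2 s^{α−1} + (s−1)^{α−1} − (α−1)(α−2) s^{α−3}| ≤ C s^{α−5}`.
(ii) For every `β ∈ [0, α]`, the function
`s ↦ | |s+1|^{α−1} − 2|s|^{α−1} + |s−1|^{α−1} | · |s|^β` is integrable on `ℝ`. -/
theorem statement19 (α : ℝ) (hα : α ∈ Set.Ioo (0:ℝ) 1) :
    (∃ C > 0, ∃ S : ℝ, 1 < S ∧ ∀ s : ℝ, S ≤ s →
      |(s + 1) ^ (α - 1) - 2 * s ^ (α - 1) + (s - 1) ^ (α - 1)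
          - (α - 1) * (α - 2) * s ^ (α - 3)|
        ≤ C * s ^ (α - 5)) ∧
    (∀ β : ℝ, β ∈ Set.Icc (0:ℝ) α →
      MeasureTheory.Integrable (fun s : ℝ =>
        |abs (s + 1) ^ (α - 1) - 2 * abs s ^ (α - 1) + abs (s - 1) ^ (α - 1)|
          * abs s ^ β)) := by
  obtain ⟨hα0, hα1⟩ := hα
  constructor
  · have hK : 0 < (1 - α) * (2 - α) * (3 - α) * (4 - α) := by
      apply_rules [mul_pos] <;> linarith
    refine ⟨(1 - α) * (2 - α) * (3 - α) * (4 - α) * 2 ^ (5 - α) / 12, by positivity,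
      2, one_lt_two, fun s hs => ?_⟩
    have h := abs_rpow_second_difference_sub_le (r := α - 1) (by linarith) hs
    rw [show (α - 1) * (α - 1 - 1) * (α - 1 - 2) * (α - 1 - 3)
        = (1 - α) * (2 - α) * (3 - α) * (4 - α) by ring, abs_of_pos hK] at h
    convert h using 3 <;> ring_nf
  · rintro β ⟨hβ0, hβα⟩
    refine LocallyIntegrable.integrable_of_isBigO_atTop_of_norm_isNegInvariant ?_ ?_
      (isBigO_abs_rpow_second_difference_mul_abs_rpow (r := α - 1) (by linarith) β)
      (integrableAtFilter_rpow_atTop_iff.2 (by linarith))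
    · have hD := locallyIntegrable_abs_rpow_second_difference (r := α - 1) (by linarith)
      exact (hD.mono hD.aestronglyMeasurable.norm (.of_forall fun s => by simp)).mul_continuous
        (continuous_abs.rpow_const fun _ => Or.inr hβ0)
    · refine .of_forall fun s => ?_
      simp only [Function.comp_apply, abs_neg, show -s + 1 = -(s - 1) by ring,
        show -s - 1 = -(s + 1) by ring]
      ring_nf
end
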